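/- arXiv:0912.3904 — 3 statements merged into one kernel-verified Lean document; each statement's English description precedes it below -/
import Mathlib

section
/- Fix κ, ρ ∈ (0,∞). For each n let (X_n(T))_{T≥0} be the edge reconnecting model with parameter κ on A_n^{m(n)} with vertex exchangeable initial state X_n(0); assume lim_n 2m(n)/n² = ρ, and that there exist λ ∈ (0, κ/ρ) and C < ∞ with E[e^{λ X_n(0,i,j)}] ≤ C for all n and all i,j ∈ [n]. Then there exists n' ∈ ℕ such that for every t, z ∈ [0,∞), every n ≥ n' and every i ∈ [n]: P( max_{0 ≤ T ≤ 2m(n)·n·t} (1/n)·d(X_n(T),i) ≥ z ) ≤ C·e^{2λκt}·e^{−λz}. -/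
open MeasureTheory Filter Set
open scoped Classical ENNReal Topology BigOperators

noncomputable section

/-- `B : ℕ → ℕ → ℕ` is the adjacency matrix of a multigraph on vertex set `{0,…,n-1}`:
symmetric, even diagonal entries (loops counted twice), vanishing outside `[0,n)²`. -/
def IsAdjOn (n : ℕ) (B : ℕ → ℕ → ℕ) : Prop :=
  (∀ i j, B i j = B j i) ∧ (∀ i, 2 ∣ B i i) ∧ ∀ i j, n ≤ i ∨ n ≤ j → B i j = 0

/-- Degree `d(B,i)` of vertex `i` in a multigraph on `n` vertices. -/
def degB (n : ℕ) (B : ℕ → ℕ → ℕ) (i : ℕ) : ℕ := ∑ j ∈ Finset.range n, B i j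

/-- Adjacency matrix of a multigraph on `n` vertices with `m` edges. -/
def IsAdjOnM (n m : ℕ) (B : ℕ → ℕ → ℕ) : Prop :=
  IsAdjOn n B ∧ ∑ i ∈ Finset.range n, ∑ j ∈ Finset.range n, B i j = 2 * m

/-- Top-left `k × k` submatrix (set to zero outside). -/
def subMat (k : ℕ) (B : ℕ → ℕ → ℕ) : ℕ → ℕ → ℕ :=
  fun i j => if i < k ∧ j < k then B i j else 0

/-- Induced homomorphism density `t_=(A,B)` of a `k`-vertex multigraph in an `n`-vertex one. -/
def tEqB (k n : ℕ) (A B : ℕ → ℕ → ℕ) : ℝ :=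
  ((Finset.univ.filter fun φ : Fin k → Fin n =>
      ∀ i j : Fin k, A i j = B (φ i) (φ j)).card : ℝ) / (n : ℝ) ^ k

/-- A multigraphon: symmetric, probability distribution on ℕ in each fibre over `[0,1]²`,
no odd diagonal values. -/
def IsMultigraphon (W : ℝ → ℝ → ℕ → ℝ) : Prop :=
  Measurable (fun p : ℝ × ℝ × ℕ => W p.1 p.2.1 p.2.2) ∧
  (∀ x y k, 0 ≤ W x y k ∧ W x y k ≤ 1) ∧
  (∀ x y k, W x y k = W y x k) ∧
  (∀ x ∈ Icc (0:ℝ) 1, ∀ y ∈ Icc (0:ℝ) 1, (∑' k : ℕ, W x y k) = 1) ∧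
  (∀ x k, W x x (2 * k + 1) = 0)

/-- Induced homomorphism density `t_=(A,W)` of a multigraph in a multigraphon. -/
def tEqW (k : ℕ) (A : ℕ → ℕ → ℕ) (W : ℝ → ℝ → ℕ → ℝ) : ℝ :=
  ∫ x : Fin k → ℝ in Set.univ.pi (fun _ : Fin k => Icc (0:ℝ) 1),
    ∏ i : Fin k, ∏ j ∈ Finset.univ.filter (fun j : Fin k => i ≤ j),
      W (x i) (x j) (A i j)

/-- The average degree `D(W,x)` of a multigraphon at `x`. -/
def degW (W : ℝ → ℝ → ℕ → ℝ) (x : ℝ) : ℝ :=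
  ∫ y in Icc (0:ℝ) 1, ∑' k : ℕ, (k : ℝ) * W x y k

/-- The edge density `ρ(W)` of a multigraphon. -/
def rhoW (W : ℝ → ℝ → ℕ → ℝ) : ℝ := ∫ x in Icc (0:ℝ) 1, degW W x

/-- One step of the edge reconnecting dynamics: the edge `{vold, w}` is replaced by `{vnew, w}`. -/
def stepER (B : ℕ → ℕ → ℕ) (vold w vnew : ℕ) : ℕ → ℕ → ℕ := fun a b =>
  B a b - (if a = vold ∧ b = w then 1 else 0) - (if a = w ∧ b = vold then 1 else 0)
    + (if a = vnew ∧ b = w then 1 else 0) + (if a = w ∧ b = vnew then 1 else 0)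

/-- Transition probability of the edge reconnecting model with parameter `κ`
on multigraphs with `n` vertices and `m` edges. -/
def transER (κ : ℝ) (n m : ℕ) (B B' : ℕ → ℕ → ℕ) : ℝ :=
  ∑ v ∈ Finset.range n, ∑ w ∈ Finset.range n, ∑ u ∈ Finset.range n,
    ((B v w : ℝ) / (2 * m)) * (((degB n B u : ℝ) + κ) / (2 * m + n * κ)) *
      (if B' = stepER B v w u then 1 else 0)

/-- `(X T)_{T≥0}` is an edge reconnecting model with parameter `κ` on `A_n^m`:
a Markov chain with the edge reconnecting transition probabilities. -/
def IsEdgeReconnecting (κ : ℝ) {Ω : Type*} [MeasurableSpace Ω] (μ : Measure Ω)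
    (n m : ℕ) (X : ℕ → Ω → ℕ → ℕ → ℕ) : Prop :=
  (∀ T i j, Measurable fun ω => X T ω i j) ∧
  (∀ T ω, IsAdjOnM n m (X T ω)) ∧
  ∀ (T : ℕ) (past : ℕ → ℕ → ℕ → ℕ) (B' : ℕ → ℕ → ℕ),
    μ {ω | (∀ S ≤ T, X S ω = past S) ∧ X (T + 1) ω = B'} =
      μ {ω | ∀ S ≤ T, X S ω = past S} * ENNReal.ofReal (transER κ n m (past T) B')

/-- Vertex exchangeability of a random adjacency matrix on `n` vertices. -/
def VertexExchangeable {Ω : Type*} [MeasurableSpace Ω] (μ : Measure Ω)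
    (n : ℕ) (X0 : Ω → ℕ → ℕ → ℕ) : Prop :=
  ∀ τ : Equiv.Perm ℕ, (∀ i, n ≤ i → τ i = i) →
    ∀ B : ℕ → ℕ → ℕ, μ {ω | X0 ω = B} = μ {ω | (fun i j => X0 ω (τ i) (τ j)) = B}

/-- Poisson point probability `p(k,λ)`. -/
def poiP (k : ℕ) (l : ℝ) : ℝ := Real.exp (-l) * l ^ k / (Nat.factorial k : ℝ)

/-- Binomial point probability `b(k,n,p)`. -/
def binP (k n : ℕ) (p : ℝ) : ℝ := (n.choose k : ℝ) * p ^ k * (1 - p) ^ (n - k)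

/-- `q(t,h,k,μ)`: time-`t` transition probability from `h` to `k` of the M/M/∞ queue with
arrival rate `μ` and service rate 1. -/
def qMM (t : ℝ) (h k : ℕ) (μ : ℝ) : ℝ :=
  ∑ l ∈ Finset.range (k + 1), binP l h (Real.exp (-t)) * poiP (k - l) ((1 - Real.exp (-t)) * μ)

/-- The multigraphon `W_t` describing the edge reconnecting model on the `n²` time scale. -/
def WtER (W : ℝ → ℝ → ℕ → ℝ) (t : ℝ) : ℝ → ℝ → ℕ → ℝ := fun x y k =>
  if x = y then
    (if 2 ∣ k then
      ∑' h : ℕ, W x x (2 * h) * qMM t h (k / 2) (degW W x ^ 2 / (2 * rhoW W))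
     else 0)
  else ∑' h : ℕ, W x y h * qMM t h k (degW W x * degW W y / rhoW W)

/-- Gamma density `g(x,α,β)`. -/
def gamP (x α β : ℝ) : ℝ :=
  if 0 < x then x ^ (α - 1) * (β ^ α * Real.exp (-(β * x)) / Real.Gamma α) else 0

/-- `τ(α,t) = α/(e^{αt}-1)`. -/
def tauCIR (α t : ℝ) : ℝ := α / (Real.exp (α * t) - 1)

/-- Transition density `f(t,z,y)` of the Cox–Ingersoll–Ross process with parameters `κ, ρ`. -/
def cirDens (κ ρ t z y : ℝ) : ℝ :=
  ∑' i : ℕ, poiP i (z * tauCIR (κ / ρ) t) * gamP y ((κ : ℝ) + i) (tauCIR (κ / ρ) t + κ / ρ)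

/-- The measure `dF₀` where `F₀(x) = Leb{y ∈ [0,1] : D(W,y) ≤ x}`: the push-forward of
Lebesgue measure on `[0,1]` under the average degree function. -/
def F0meas (W : ℝ → ℝ → ℕ → ℝ) : Measure ℝ :=
  Measure.map (degW W) (volume.restrict (Icc (0:ℝ) 1))

/-- The distribution function `F₀(x) = Leb{y ∈ [0,1] : D(W,y) ≤ x}`. -/
def F0fun (W : ℝ → ℝ → ℕ → ℝ) (x : ℝ) : ℝ :=
  (volume {y ∈ Icc (0:ℝ) 1 | degW W y ≤ x}).toReal

/-- Generalized inverse `F₀⁻¹(x) = min{z : F₀(z) ≥ x}`. -/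
def F0inv (W : ℝ → ℝ → ℕ → ℝ) (x : ℝ) : ℝ := sInf {z : ℝ | x ≤ F0fun W z}

/-- The mixed CIR density `f(t,y) = ∫₀^∞ f(t,z,y) dF₀(z)`. -/
def fCIRmix (κ ρ : ℝ) (W : ℝ → ℝ → ℕ → ℝ) (t y : ℝ) : ℝ :=
  ∫ z, cirDens κ ρ t z y ∂(F0meas W)

/-- The distribution function `F_t(x) = ∫₀ˣ f(t,y) dy`. -/
def Fcir (κ ρ : ℝ) (W : ℝ → ℝ → ℕ → ℝ) (t x : ℝ) : ℝ :=
  ∫ y in Ioc (0:ℝ) x, fCIRmix κ ρ W t y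

/-- Generalized inverse `F_t⁻¹(x) = min{z : F_t(z) ≥ x}`. -/
def FcirInv (κ ρ : ℝ) (W : ℝ → ℝ → ℕ → ℝ) (t x : ℝ) : ℝ :=
  sInf {z : ℝ | x ≤ Fcir κ ρ W t z}

/-- The multigraphon `Ŵ_t` describing the edge reconnecting model on the `n³` time scale. -/
def WhatER (κ : ℝ) (W : ℝ → ℝ → ℕ → ℝ) (t : ℝ) : ℝ → ℝ → ℕ → ℝ := fun x y k =>
  if x = y then
    (if 2 ∣ k then poiP (k / 2) (FcirInv κ (rhoW W) W t x ^ 2 / (2 * rhoW W)) else 0)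
  else poiP k (FcirInv κ (rhoW W) W t x * FcirInv κ (rhoW W) W t y / rhoW W)

/-- The product measure on `ℝ^k` of `k` i.i.d. coordinates with density `f(t,·)`. -/
def cirPi (κ ρ : ℝ) (W : ℝ → ℝ → ℕ → ℝ) (t : ℝ) (k : ℕ) : Measure (Fin k → ℝ) :=
  volume.withDensity fun z => ∏ i : Fin k, ENNReal.ofReal (fCIRmix κ ρ W t (z i))

/-- Condition (E): uniform exponential moment bound for the initial multigraphs. -/
def CondE (B : (n : ℕ) → ℕ → ℕ → ℕ) : Prop :=
  ∃ lam : ℝ, 0 < lam ∧ ∃ C : ℝ, ∀ n : ℕ,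
    (∑ i ∈ Finset.range n, ∑ j ∈ (Finset.range n).filter (fun j => i < j),
        Real.exp (lam * (B n i j : ℝ))) ≤ C * (n.choose 2 : ℝ) ∧
    (∑ i ∈ Finset.range n, Real.exp (lam * (B n i i : ℝ))) ≤ C * (n : ℝ)

/-- Convergence `B_n → W` of a sequence of multigraphs to a multigraphon. -/
def GraphSeqConvTo (B : (n : ℕ) → ℕ → ℕ → ℕ) (W : ℝ → ℝ → ℕ → ℝ) : Prop :=
  ∀ (k : ℕ) (A : ℕ → ℕ → ℕ), IsAdjOn k A →
    Tendsto (fun n => tEqB k n A (B n)) atTop (𝓝 (tEqW k A W))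


/-!
Write `s = λ/n`, `d = d(X(T), i)` and `g(B) = exp (λ d(B, i) / n)`. In one step vertex `i` loses an
edge end with probability `d/2m` and gains one with probability `(d + κ)/(2m + nκ)`, so
`E[g(X(T+1)) | past] ≤ e^c g(X(T))` with `c = (e^s - 1) κ / (2m + nκ)`, provided
`2m e^s ≤ 2m + nκ`; since `2m/n² → ρ` and `λρ < κ`, this holds for all large `n`.
Hence `e^{-cT} g(X(T))` is a supermartingale, and stopping it when `d/n` first reaches `z` gives
`e^{λz} P(max_{T ≤ N} d(X(T), i)/n ≥ z) ≤ e^{cN} E g(X(0))`. Jensen's inequality bounds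
`E g(X(0))` by the exponential moments of the entries, hence by `C`, and `cN ≤ λκt` for
`N ≤ 2mnt`.
-/

section FiniteValued

variable {Ω β : Type*} {Z : Ω → β} {F : Finset β}

lemma preimage_eq_biUnion_filter (hZ : ∀ ω, Z ω ∈ F) (A : Set β) :
    Z ⁻¹' A = ⋃ b ∈ F.filter (· ∈ A), Z ⁻¹' {b} := by
  ext ω
  simp [hZ ω]

lemma measurableSet_preimage_of_forall_mem [MeasurableSpace Ω] (hZ : ∀ ω, Z ω ∈ F)
    (hZm : ∀ b, MeasurableSet (Z ⁻¹' {b})) (A : Set β) : MeasurableSet (Z ⁻¹' A) := by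
  rw [preimage_eq_biUnion_filter hZ]
  exact Finset.measurableSet_biUnion _ fun b _ => hZm b

lemma setLIntegral_preimage_eq_sum [MeasurableSpace Ω] (ν : Measure Ω) (hZ : ∀ ω, Z ω ∈ F)
    (hZm : ∀ b, MeasurableSet (Z ⁻¹' {b})) (A : Set β) (φ : Ω → ℝ≥0∞) :
    ∫⁻ ω in Z ⁻¹' A, φ ω ∂ν = ∑ b ∈ F.filter (· ∈ A), ∫⁻ ω in Z ⁻¹' {b}, φ ω ∂ν := by
  rw [preimage_eq_biUnion_filter hZ]
  refine lintegral_biUnion_finset ?_ (fun b _ => hZm b) φ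
  intro b _ b' _ hbb'
  exact Set.disjoint_left.2 fun ω hb hb' => hbb' (hb.symm.trans hb')

lemma lintegral_comp_eq_sum [MeasurableSpace Ω] (ν : Measure Ω) (hZ : ∀ ω, Z ω ∈ F)
    (hZm : ∀ b, MeasurableSet (Z ⁻¹' {b})) (f : β → ℝ≥0∞) :
    ∫⁻ ω, f (Z ω) ∂ν = ∑ b ∈ F, f b * ν (Z ⁻¹' {b}) := by
  rw [← setLIntegral_univ, ← Set.preimage_univ (f := Z),
    setLIntegral_preimage_eq_sum ν hZ hZm]
  simp only [Set.mem_univ, Finset.filter_true]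
  refine Finset.sum_congr rfl fun b _ => ?_
  rw [setLIntegral_congr_fun (hZm b) fun ω (hω : Z ω = b) => by rw [hω], setLIntegral_const]

end FiniteValued

section MarkovChain

variable {Ω S : Type*}

def IsMarkovChain [MeasurableSpace Ω] (μ : Measure Ω) (X : ℕ → Ω → S) (P : S → S → ℝ≥0∞) : Prop :=
  ∀ (T : ℕ) (past : ℕ → S) (b : S),
    μ {ω | (∀ k ≤ T, X k ω = past k) ∧ X (T + 1) ω = b} =
      μ {ω | ∀ k ≤ T, X k ω = past k} * P (past T) b

def trajectory (X : ℕ → Ω → S) (T : ℕ) (ω : Ω) : Fin (T + 1) → S := fun k => X k ω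

variable {X : ℕ → Ω → S} {F : Finset S}

lemma trajectory_mem_piFinset (hXF : ∀ T ω, X T ω ∈ F) (T : ℕ) (ω : Ω) :
    trajectory X T ω ∈ Fintype.piFinset fun _ => F :=
  Fintype.mem_piFinset.2 fun k => hXF k ω

def avoidUpTo (X : ℕ → Ω → S) (U : Set S) (T : ℕ) : Set Ω := {ω | ∀ k ≤ T, X k ω ∉ U}

variable {U : Set S}

lemma avoidUpTo_eq_preimage_trajectory (T : ℕ) :
    avoidUpTo X U T = trajectory X T ⁻¹' {p | ∀ k, p k ∉ U} := by
  ext ω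
  simp [avoidUpTo, trajectory, Fin.forall_iff]

lemma avoidUpTo_succ (T : ℕ) : avoidUpTo X U (T + 1) = avoidUpTo X U T \ X (T + 1) ⁻¹' U := by
  ext ω
  simp only [avoidUpTo, Set.mem_ofPred_eq, Set.mem_sdiff, Set.mem_preimage,
    Nat.le_succ_iff_eq_or_le]
  grind

lemma compl_avoidUpTo (N : ℕ) : (avoidUpTo X U N)ᶜ = {ω | ∃ T ≤ N, X T ω ∈ U} := by
  ext ω
  simp [avoidUpTo]

variable [MeasurableSpace Ω] {μ : Measure Ω} {P : S → S → ℝ≥0∞}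

lemma measurableSet_trajectory_preimage_singleton (hXm : ∀ T b, MeasurableSet (X T ⁻¹' {b}))
    (T : ℕ) (p : Fin (T + 1) → S) : MeasurableSet (trajectory X T ⁻¹' {p}) := by
  have hcyl : trajectory X T ⁻¹' {p} = ⋂ k : Fin (T + 1), X k ⁻¹' {p k} := by
    ext ω
    simp [trajectory, funext_iff]
  rw [hcyl]
  exact MeasurableSet.iInter fun k => hXm k (p k)

lemma IsMarkovChain.measure_trajectory_preimage_inter (h : IsMarkovChain μ X P) (T : ℕ)
    (p : Fin (T + 1) → S) (b : S) :
    μ (trajectory X T ⁻¹' {p} ∩ X (T + 1) ⁻¹' {b}) =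
      μ (trajectory X T ⁻¹' {p}) * P (p (Fin.last T)) b := by
  -- any extension of `p` to a path indexed by `ℕ` describes the same cylinder
  have hcyl : trajectory X T ⁻¹' {p} = {ω | ∀ k ≤ T, X k ω = p ⟨min k T, by omega⟩} := by
    ext ω
    simp +contextual [trajectory, funext_iff, Fin.forall_iff]
  have hstep := h T (fun k => p ⟨min k T, by omega⟩) b
  simp only [min_self] at hstep
  rw [hcyl]
  exact hstep

lemma IsMarkovChain.setLIntegral_succ_le (h : IsMarkovChain μ X P) (hXF : ∀ T ω, X T ω ∈ F)
    (hXm : ∀ T b, MeasurableSet (X T ⁻¹' {b})) {g : S → ℝ≥0∞} {a : ℝ≥0∞}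
    (hdrift : ∀ x ∈ F, ∑ b ∈ F, P x b * g b ≤ a * g x) (T : ℕ) (A : Set (Fin (T + 1) → S)) :
    ∫⁻ ω in trajectory X T ⁻¹' A, g (X (T + 1) ω) ∂μ ≤
      a * ∫⁻ ω in trajectory X T ⁻¹' A, g (X T ω) ∂μ := by
  have hfiber : ∀ p ∈ Fintype.piFinset fun _ => F,
      ∫⁻ ω in trajectory X T ⁻¹' {p}, g (X (T + 1) ω) ∂μ ≤
        a * ∫⁻ ω in trajectory X T ⁻¹' {p}, g (X T ω) ∂μ := by
    intro p hp
    set last := p (Fin.last T)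
    have hlast : ∫⁻ ω in trajectory X T ⁻¹' {p}, g (X T ω) ∂μ =
        g last * μ (trajectory X T ⁻¹' {p}) := by
      rw [← setLIntegral_const]
      exact setLIntegral_congr_fun (measurableSet_trajectory_preimage_singleton hXm T p)
        fun ω (hω : trajectory X T ω = p) => congrArg g (congrFun hω (Fin.last T))
    rw [lintegral_comp_eq_sum _ (hXF (T + 1)) (hXm (T + 1)), hlast]
    simp_rw [Measure.restrict_apply (hXm _ _), Set.inter_comm _ (trajectory X T ⁻¹' {p}),
      h.measure_trajectory_preimage_inter]
    calc ∑ b ∈ F, g b * (μ (trajectory X T ⁻¹' {p}) * P last b)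
        = μ (trajectory X T ⁻¹' {p}) * ∑ b ∈ F, P last b * g b := by
          rw [Finset.mul_sum]
          exact Finset.sum_congr rfl fun b _ => by ring
      _ ≤ μ (trajectory X T ⁻¹' {p}) * (a * g last) := by
          gcongr
          exact hdrift _ (Fintype.mem_piFinset.1 hp _)
      _ = a * (g last * μ (trajectory X T ⁻¹' {p})) := by ring
  rw [setLIntegral_preimage_eq_sum μ (trajectory_mem_piFinset hXF T)
      (measurableSet_trajectory_preimage_singleton hXm T),
    setLIntegral_preimage_eq_sum μ (trajectory_mem_piFinset hXF T)
      (measurableSet_trajectory_preimage_singleton hXm T), Finset.mul_sum]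
  exact Finset.sum_le_sum fun p hp => hfiber p (Finset.mem_filter.1 hp).1

lemma measurableSet_avoidUpTo (hXF : ∀ T ω, X T ω ∈ F)
    (hXm : ∀ T b, MeasurableSet (X T ⁻¹' {b})) (T : ℕ) : MeasurableSet (avoidUpTo X U T) := by
  rw [avoidUpTo_eq_preimage_trajectory]
  exact measurableSet_preimage_of_forall_mem (trajectory_mem_piFinset hXF T)
    (measurableSet_trajectory_preimage_singleton hXm T) _

/-- The left-hand side is at most `E g(X(min T τ))`, `τ` the entrance time of `U`, and this
stopped expectation grows by at most the factor `a` per step. -/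
lemma IsMarkovChain.setLIntegral_avoidUpTo_add_le (h : IsMarkovChain μ X P)
    (hXF : ∀ T ω, X T ω ∈ F) (hXm : ∀ T b, MeasurableSet (X T ⁻¹' {b})) {g : S → ℝ≥0∞}
    {a : ℝ≥0∞} (ha : 1 ≤ a) (hdrift : ∀ x ∈ F, ∑ b ∈ F, P x b * g b ≤ a * g x)
    {c : ℝ≥0∞} (hU : ∀ b ∈ U, c ≤ g b) (T : ℕ) :
    ∫⁻ ω in avoidUpTo X U T, g (X T ω) ∂μ + c * μ (avoidUpTo X U T)ᶜ ≤
      a ^ T * ∫⁻ ω, g (X 0 ω) ∂μ := by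
  have hA := measurableSet_avoidUpTo (U := U) hXF hXm
  have hhit : ∀ T, MeasurableSet (X T ⁻¹' U) := fun T =>
    measurableSet_preimage_of_forall_mem (hXF T) (hXm T) U
  have hcost : ∀ T (s : Set Ω), MeasurableSet s → s ⊆ X T ⁻¹' U →
      c * μ s ≤ ∫⁻ ω in s, g (X T ω) ∂μ := fun T s hs hsU => by
    rw [← setLIntegral_const]
    exact setLIntegral_mono' hs fun ω hω => hU _ (hsU hω)
  induction T with
  | zero =>
    calc _ ≤ ∫⁻ ω in avoidUpTo X U 0, g (X 0 ω) ∂μ + ∫⁻ ω in (avoidUpTo X U 0)ᶜ, g (X 0 ω) ∂μ := by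
          gcongr
          refine hcost 0 _ (hA 0).compl fun ω hω => ?_
          simpa [compl_avoidUpTo] using hω
      _ = _ := by rw [lintegral_add_compl _ (hA 0), pow_zero, one_mul]
  | succ T ih =>
    set A := avoidUpTo X U T
    set E := X (T + 1) ⁻¹' U
    have hstopped : μ (avoidUpTo X U (T + 1))ᶜ = μ Aᶜ + μ (A ∩ E) := by
      rw [← measure_union (disjoint_compl_left.mono_right Set.inter_subset_left)
        ((hA T).inter (hhit _)), avoidUpTo_succ]
      congr 1
      ext ω
      simp only [Set.mem_compl_iff, Set.mem_sdiff, Set.mem_union, Set.mem_inter_iff]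
      tauto
    calc ∫⁻ ω in avoidUpTo X U (T + 1), g (X (T + 1) ω) ∂μ + c * μ (avoidUpTo X U (T + 1))ᶜ
        = ∫⁻ ω in A \ E, g (X (T + 1) ω) ∂μ + c * μ (A ∩ E) + c * μ Aᶜ := by
          rw [hstopped, avoidUpTo_succ]; ring
      _ ≤ ∫⁻ ω in A ∩ E, g (X (T + 1) ω) ∂μ + ∫⁻ ω in A \ E, g (X (T + 1) ω) ∂μ + c * μ Aᶜ := by
          rw [add_comm (∫⁻ ω in A ∩ E, _ ∂μ)]
          gcongr
          exact hcost _ _ ((hA T).inter (hhit _)) Set.inter_subset_right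
      _ = ∫⁻ ω in A, g (X (T + 1) ω) ∂μ + c * μ Aᶜ := by
          rw [lintegral_inter_add_sdiff _ _ (hhit _)]
      _ ≤ a * ∫⁻ ω in A, g (X T ω) ∂μ + a * (c * μ Aᶜ) := by
          refine add_le_add ?_ (le_mul_of_one_le_left' ha)
          have hstep := h.setLIntegral_succ_le hXF hXm hdrift T {p | ∀ k, p k ∉ U}
          rwa [← avoidUpTo_eq_preimage_trajectory] at hstep
      _ ≤ a * (a ^ T * ∫⁻ ω, g (X 0 ω) ∂μ) := by rw [← mul_add]; gcongr
      _ = a ^ (T + 1) * ∫⁻ ω, g (X 0 ω) ∂μ := by ring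

theorem IsMarkovChain.mul_measure_exists_mem_le (h : IsMarkovChain μ X P)
    (hXF : ∀ T ω, X T ω ∈ F) (hXm : ∀ T b, MeasurableSet (X T ⁻¹' {b})) {g : S → ℝ≥0∞}
    {a : ℝ≥0∞} (ha : 1 ≤ a) (hdrift : ∀ x ∈ F, ∑ b ∈ F, P x b * g b ≤ a * g x)
    {c : ℝ≥0∞} (hU : ∀ b ∈ U, c ≤ g b) (N : ℕ) :
    c * μ {ω | ∃ T ≤ N, X T ω ∈ U} ≤ a ^ N * ∫⁻ ω, g (X 0 ω) ∂μ := by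
  rw [← compl_avoidUpTo]
  exact le_add_self.trans (h.setLIntegral_avoidUpTo_add_le hXF hXm ha hdrift hU N)

end MarkovChain

lemma sum_mul_ite_eq_add {ι : Type*} [DecidableEq ι] {s : Finset ι} {i : ι} (hi : i ∈ s)
    (f : ι → ℝ) (x : ℝ) :
    ∑ v ∈ s, f v * (if i = v then x else 1) = ∑ v ∈ s, f v + (x - 1) * f i := by
  have hsplit : ∀ v, f v * (if i = v then x else 1) = f v + if i = v then (x - 1) * f v else 0 :=
    fun v => by split_ifs <;> ring
  simp only [hsplit, Finset.sum_add_distrib, Finset.sum_ite_eq, if_pos hi]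

lemma one_step_factor_le {s d a M κ : ℝ} (hs : 0 ≤ s) (hd : 0 ≤ d) (hda : d ≤ a) (ha : 0 < a)
    (hM : a * Real.exp s ≤ M) (hκ : 0 ≤ κ) :
    (1 + (Real.exp (-s) - 1) * (d / a)) * (1 + (Real.exp s - 1) * ((d + κ) / M)) ≤
      Real.exp ((Real.exp s - 1) * κ / M) := by
  have hM0 : 0 < M := lt_of_lt_of_le (by positivity) hM
  have hexp : Real.exp s * Real.exp (-s) = 1 := by simp [← Real.exp_add]
  have hes : 1 ≤ Real.exp s := Real.one_le_exp hs
  have hens : Real.exp (-s) ≤ 1 := Real.exp_le_one_iff.2 (by linarith)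
  set x := (1 - Real.exp (-s)) * (d / a)
  set y := (Real.exp s - 1) * κ / M
  have hx0 : 0 ≤ x := mul_nonneg (by linarith) (by positivity)
  have hx1 : x ≤ 1 := by
    have : d / a ≤ 1 := (div_le_one ha).2 hda
    nlinarith [Real.exp_pos (-s)]
  have hy : 0 ≤ y := by positivity
  -- `e^s - 1 = e^s (1 - e^{-s})` and `e^s / M ≤ 1 / a`
  have hgain : (Real.exp s - 1) * (d / M) ≤ x := by
    have hratio : Real.exp s * (d / M) ≤ d / a := by
      rw [mul_div_assoc', div_le_div_iff₀ hM0 ha]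
      nlinarith
    calc (Real.exp s - 1) * (d / M) = (1 - Real.exp (-s)) * (Real.exp s * (d / M)) := by
          linear_combination (d / M) * hexp
      _ ≤ (1 - Real.exp (-s)) * (d / a) := by gcongr
  calc (1 + (Real.exp (-s) - 1) * (d / a)) * (1 + (Real.exp s - 1) * ((d + κ) / M))
      = (1 - x) * (1 + (Real.exp s - 1) * (d / M) + y) := by ring
    _ ≤ (1 - x) * (1 + x + y) := by gcongr
    _ ≤ 1 + y := by nlinarith
    _ ≤ Real.exp y := by linarith [Real.add_one_le_exp y]

lemma exp_sub_one_le_mul_exp (x : ℝ) : Real.exp x - 1 ≤ x * Real.exp x := by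
  have hinv : Real.exp x * Real.exp (-x) = 1 := by simp [← Real.exp_add]
  nlinarith [Real.one_sub_le_exp_neg x, Real.exp_pos x]

lemma exp_sum_div_le_sum_exp_div {n : ℕ} (hn : 0 < n) (x : ℕ → ℝ) :
    Real.exp ((∑ j ∈ Finset.range n, x j) / n) ≤ (∑ j ∈ Finset.range n, Real.exp (x j)) / n := by
  have hjensen := convexOn_exp.map_sum_le (t := Finset.range n) (w := fun _ => (n : ℝ)⁻¹)
    (p := x) (fun _ _ => by positivity) (by simp [hn.ne']) (fun _ _ => Set.mem_univ _)
  simpa [← Finset.mul_sum, div_eq_inv_mul] using hjensen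

def driftExponent (κ lam : ℝ) (n m : ℕ) : ℝ :=
  (Real.exp (lam / n) - 1) * κ / (2 * m + n * κ)

lemma driftExponent_nonneg {κ lam : ℝ} (hκ : 0 ≤ κ) (hlam : 0 ≤ lam) (n m : ℕ) :
    0 ≤ driftExponent κ lam n m := by
  have : 0 ≤ Real.exp (lam / n) - 1 := by linarith [Real.one_le_exp (by positivity : 0 ≤ lam / n)]
  unfold driftExponent
  positivity

lemma mul_driftExponent_le {κ lam : ℝ} (hκ : 0 ≤ κ) (hlam : 0 ≤ lam) {n m : ℕ} (hn : 0 < n)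
    (hm : 0 < m) (hdrift : 2 * m * Real.exp (lam / n) ≤ 2 * m + n * κ) :
    2 * m * n * driftExponent κ lam n m ≤ lam * κ := by
  have hM : (0 : ℝ) < 2 * m + n * κ := by positivity
  have hgrowth : 2 * m * n * (Real.exp (lam / n) - 1) ≤ lam * (2 * m + n * κ) :=
    calc 2 * m * n * (Real.exp (lam / n) - 1)
        ≤ 2 * m * n * (lam / n * Real.exp (lam / n)) := by
          gcongr
          exact exp_sub_one_le_mul_exp _
      _ = lam * (2 * m * Real.exp (lam / n)) := by field_simp
      _ ≤ lam * (2 * m + n * κ) := by gcongr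
  rw [driftExponent, ← mul_div_assoc, div_le_iff₀ hM]
  nlinarith

lemma floor_mul_driftExponent_le {κ lam : ℝ} (hκ : 0 ≤ κ) (hlam : 0 ≤ lam) {n m : ℕ}
    (hn : 0 < n) (hm : 0 < m) (hdrift : 2 * m * Real.exp (lam / n) ≤ 2 * m + n * κ) {t : ℝ}
    (ht : 0 ≤ t) : ⌊2 * (m : ℝ) * n * t⌋₊ * driftExponent κ lam n m ≤ lam * κ * t :=
  calc ⌊2 * (m : ℝ) * n * t⌋₊ * driftExponent κ lam n m
      ≤ 2 * m * n * t * driftExponent κ lam n m := by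
        gcongr
        · exact driftExponent_nonneg hκ hlam n m
        · exact Nat.floor_le (by positivity)
    _ = t * (2 * m * n * driftExponent κ lam n m) := by ring
    _ ≤ t * (lam * κ) := mul_le_mul_of_nonneg_left (mul_driftExponent_le hκ hlam hn hm hdrift) ht
    _ = lam * κ * t := by ring

lemma eventually_pos_and_drift_le {κ ρ lam : ℝ} (hρ : 0 < ρ) (hlamκρ : lam < κ / ρ)
    {m : ℕ → ℕ} (hm : Tendsto (fun n => (2 * (m n : ℝ)) / (n : ℝ) ^ 2) atTop (𝓝 ρ)) :
    ∀ᶠ n : ℕ in atTop, 0 < m n ∧ 2 * m n * Real.exp (lam / n) ≤ 2 * m n + n * κ := by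
  have hexp : Tendsto (fun n : ℕ => Real.exp (lam / n)) atTop (𝓝 1) := by
    simpa [Function.comp_def] using
      (Real.continuous_exp.tendsto 0).comp (tendsto_const_div_atTop_nhds_zero_nat lam)
  have hlim := (tendsto_const_nhds (x := lam)).mul (hexp.mul hm)
  rw [one_mul] at hlim
  filter_upwards [hm.eventually (eventually_gt_nhds hρ),
    hlim.eventually (eventually_lt_nhds ((lt_div_iff₀ hρ).1 hlamκρ)), eventually_gt_atTop 0]
    with n hdensity hrate hn
  refine ⟨Nat.pos_of_ne_zero fun h => by simp [h] at hdensity, ?_⟩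
  calc 2 * m n * Real.exp (lam / n) = 2 * m n + 2 * m n * (Real.exp (lam / n) - 1) := by ring
    _ ≤ 2 * m n + 2 * m n * (lam / n * Real.exp (lam / n)) := by
        gcongr
        exact exp_sub_one_le_mul_exp _
    _ = 2 * m n + n * (lam * (Real.exp (lam / n) * (2 * m n / n ^ 2))) := by
        field_simp
    _ ≤ 2 * m n + n * κ := by gcongr

section EdgeReconnecting

variable {κ : ℝ} {n m : ℕ} {B : ℕ → ℕ → ℕ}

lemma degB_le_of_isAdjOnM (hB : IsAdjOnM n m B) {a : ℕ} (ha : a < n) : degB n B a ≤ 2 * m :=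
  hB.2 ▸ Finset.single_le_sum (f := fun i => degB n B i) (fun _ _ => Nat.zero_le _)
    (Finset.mem_range.2 ha)

lemma entry_le_of_isAdjOnM (hB : IsAdjOnM n m B) {a b : ℕ} (ha : a < n) (hb : b < n) :
    B a b ≤ 2 * m :=
  (Finset.single_le_sum (f := fun j => B a j) (fun _ _ => Nat.zero_le _)
    (Finset.mem_range.2 hb)).trans (degB_le_of_isAdjOnM hB ha)

lemma finite_setOf_isAdjOnM (n m : ℕ) : {B | IsAdjOnM n m B}.Finite := by
  refine (Set.finite_range fun (f : Fin n → Fin n → Fin (2 * m + 1)) (a b : ℕ) =>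
    if h : a < n ∧ b < n then (f ⟨a, h.1⟩ ⟨b, h.2⟩ : ℕ) else 0).subset fun B hB => ?_
  refine ⟨fun a b => ⟨B a b, Nat.lt_succ_of_le (entry_le_of_isAdjOnM hB a.2 b.2)⟩, ?_⟩
  funext a b
  by_cases h : a < n ∧ b < n
  · simp [h]
  · simp only [dif_neg h]
    exact (hB.1.2.2 a b (by omega)).symm

lemma cast_stepER (hB : IsAdjOn n B) {v w : ℕ} (hvw : 0 < B v w) (u a b : ℕ) :
    (stepER B v w u a b : ℤ) = B a b - (if a = v ∧ b = w then 1 else 0)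
      - (if a = w ∧ b = v then 1 else 0) + (if a = u ∧ b = w then 1 else 0)
      + (if a = w ∧ b = u then 1 else 0) := by
  -- the truncated subtractions are exact: the removed edge is present, twice if it is a loop
  have hremovable :
      (if a = v ∧ b = w then 1 else 0) + (if a = w ∧ b = v then 1 else 0) ≤ B a b := by
    split_ifs with h₁ h₂ h₂
    · obtain ⟨rfl, rfl⟩ := h₁
      obtain ⟨rfl, -⟩ := h₂
      have := hB.2.1 a
      omega
    · obtain ⟨rfl, rfl⟩ := h₁
      omega
    · obtain ⟨rfl, rfl⟩ := h₂
      rw [hB.1]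
      omega
    · omega
  unfold stepER
  split_ifs at hremovable ⊢ <;> omega

lemma cast_degB_stepER (hB : IsAdjOn n B) {v w u : ℕ} (hv : v < n) (hw : w < n) (hu : u < n)
    (hvw : 0 < B v w) (i : ℕ) :
    (degB n (stepER B v w u) i : ℝ) =
      degB n B i - (if i = v then 1 else 0) + (if i = u then 1 else 0) := by
  have hind : ∀ (c : Prop) [Decidable c] {x : ℕ}, x < n →
      ∑ j ∈ Finset.range n, (if c ∧ j = x then (1 : ℤ) else 0) = if c then 1 else 0 := by
    intro c _ x hx
    by_cases hc : c <;> simp [hc, hx]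
  have hℤ : (degB n (stepER B v w u) i : ℤ) =
      degB n B i - (if i = v then 1 else 0) + (if i = u then 1 else 0) := by
    simp only [degB, Nat.cast_sum, cast_stepER hB hvw, Finset.sum_add_distrib,
      Finset.sum_sub_distrib, hind _ hw, hind _ hv, hind _ hu]
    ring
  exact_mod_cast hℤ

lemma transER_nonneg (hκ : 0 ≤ κ) (B B' : ℕ → ℕ → ℕ) : 0 ≤ transER κ n m B B' := by
  unfold transER
  positivity

lemma sum_transER_mul_le (hκ : 0 ≤ κ) (F : Finset (ℕ → ℕ → ℕ))
    {G : (ℕ → ℕ → ℕ) → ℝ} (hG : ∀ B', 0 ≤ G B') :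
    ∑ B' ∈ F, transER κ n m B B' * G B' ≤
      ∑ v ∈ Finset.range n, ∑ w ∈ Finset.range n, ∑ u ∈ Finset.range n,
        B v w / (2 * m) * ((degB n B u + κ) / (2 * m + n * κ)) * G (stepER B v w u) := by
  simp only [transER, Finset.sum_mul]
  rw [Finset.sum_comm]
  gcongr with v
  rw [Finset.sum_comm]
  gcongr with w
  rw [Finset.sum_comm]
  gcongr with u
  simp only [mul_ite, ite_mul, mul_one, mul_zero, zero_mul, Finset.sum_ite_eq']
  split_ifs
  · exact le_rfl
  · have := hG (stepER B v w u)
    positivity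

lemma natCast_mul_exp_degB_stepER (hB : IsAdjOn n B) {v w u : ℕ} (hv : v < n) (hw : w < n)
    (hu : u < n) (lam : ℝ) (i : ℕ) :
    B v w * Real.exp (lam * (degB n (stepER B v w u) i / n)) =
      B v w * Real.exp (lam * (degB n B i / n)) * (if i = v then Real.exp (-(lam / n)) else 1) *
        (if i = u then Real.exp (lam / n) else 1) := by
  rcases (B v w).eq_zero_or_pos with h0 | hpos
  · simp [h0]
  · have hexp : ∀ x y : ℝ, Real.exp (lam * ((degB n B i - x + y) / n)) =
        Real.exp (lam * (degB n B i / n)) * Real.exp (-(lam / n) * x) * Real.exp (lam / n * y) :=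
      fun x y => by rw [← Real.exp_add, ← Real.exp_add]; ring_nf
    rw [cast_degB_stepER hB hv hw hu hpos, hexp]
    split_ifs <;> simp only [mul_one, mul_zero, Real.exp_zero] <;> ring

lemma sum_degB_div_mul_ite (hB : IsAdjOnM n m B) (hm : 0 < m) {i : ℕ} (hi : i < n) (x : ℝ) :
    ∑ v ∈ Finset.range n, (degB n B v : ℝ) / (2 * m) * (if i = v then x else 1) =
      1 + (x - 1) * (degB n B i / (2 * m)) := by
  have hsum : ∑ v ∈ Finset.range n, (degB n B v : ℝ) = 2 * m := by exact_mod_cast hB.2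
  rw [sum_mul_ite_eq_add (Finset.mem_range.2 hi), ← Finset.sum_div, hsum,
    div_self (by positivity)]

lemma sum_degB_add_div_mul_ite (hκ : 0 ≤ κ) (hB : IsAdjOnM n m B) (hm : 0 < m) {i : ℕ}
    (hi : i < n) (x : ℝ) :
    ∑ u ∈ Finset.range n, (degB n B u + κ) / (2 * m + n * κ) * (if i = u then x else 1) =
      1 + (x - 1) * ((degB n B i + κ) / (2 * m + n * κ)) := by
  have hsum : ∑ v ∈ Finset.range n, (degB n B v : ℝ) = 2 * m := by exact_mod_cast hB.2
  rw [sum_mul_ite_eq_add (Finset.mem_range.2 hi), ← Finset.sum_div, Finset.sum_add_distrib,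
    hsum, Finset.sum_const, Finset.card_range, nsmul_eq_mul, div_self (by positivity)]

lemma sum_transER_mul_exp_degB_le {lam : ℝ} (hκ : 0 ≤ κ) (hlam : 0 ≤ lam) (hm : 0 < m)
    (hdrift : 2 * m * Real.exp (lam / n) ≤ 2 * m + n * κ) (hB : IsAdjOnM n m B) {i : ℕ}
    (hi : i < n) (F : Finset (ℕ → ℕ → ℕ)) :
    ∑ B' ∈ F, transER κ n m B B' * Real.exp (lam * (degB n B' i / n)) ≤
      Real.exp (driftExponent κ lam n m) * Real.exp (lam * (degB n B i / n)) := by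
  set M : ℝ := 2 * m + n * κ
  set G := Real.exp (lam * (degB n B i / n))
  set lose := fun v => if i = v then Real.exp (-(lam / n)) else 1
  set gain := fun u => if i = u then Real.exp (lam / n) else 1
  have hrow : ∀ v, ∑ w ∈ Finset.range n, (B v w : ℝ) = degB n B v := fun v => by simp [degB]
  calc ∑ B' ∈ F, transER κ n m B B' * Real.exp (lam * (degB n B' i / n))
      ≤ ∑ v ∈ Finset.range n, ∑ w ∈ Finset.range n, ∑ u ∈ Finset.range n,
          B v w / (2 * m) * ((degB n B u + κ) / M) *
            Real.exp (lam * (degB n (stepER B v w u) i / n)) :=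
        sum_transER_mul_le hκ F fun _ => (Real.exp_pos _).le
    _ = G * ((∑ v ∈ Finset.range n, ∑ w ∈ Finset.range n, B v w / (2 * m) * lose v) *
          ∑ u ∈ Finset.range n, (degB n B u + κ) / M * gain u) := by
        simp only [Finset.sum_mul]
        simp only [Finset.mul_sum]
        refine Finset.sum_congr rfl fun v hv => Finset.sum_congr rfl fun w hw =>
          Finset.sum_congr rfl fun u hu => ?_
        linear_combination (degB n B u + κ) / M / (2 * m) * natCast_mul_exp_degB_stepER
          hB.1 (Finset.mem_range.1 hv) (Finset.mem_range.1 hw) (Finset.mem_range.1 hu) lam i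
    _ = G * ((1 + (Real.exp (-(lam / n)) - 1) * (degB n B i / (2 * m))) *
          (1 + (Real.exp (lam / n) - 1) * ((degB n B i + κ) / M))) := by
        simp only [← Finset.sum_mul, ← Finset.sum_div, hrow]
        rw [sum_degB_div_mul_ite hB hm hi, sum_degB_add_div_mul_ite hκ hB hm hi]
    _ ≤ G * Real.exp (driftExponent κ lam n m) := by
        gcongr
        exact one_step_factor_le (by positivity) (by positivity)
          (by exact_mod_cast degB_le_of_isAdjOnM hB hi) (by positivity) hdrift hκ
    _ = _ := mul_comm _ _

variable {Ω : Type*} [MeasurableSpace Ω] {μ : Measure Ω} {X : ℕ → Ω → ℕ → ℕ → ℕ}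

lemma lintegral_exp_degB_div_le {Y : Ω → ℕ → ℕ → ℕ} {i : ℕ} (hn : 0 < n) {lam C : ℝ}
    (hY : ∀ j, Measurable fun ω => Y ω i j)
    (hmom : ∀ j < n, ∫⁻ ω, ENNReal.ofReal (Real.exp (lam * Y ω i j)) ∂μ ≤ ENNReal.ofReal C) :
    ∫⁻ ω, ENNReal.ofReal (Real.exp (lam * (degB n (Y ω) i / n))) ∂μ ≤ ENNReal.ofReal C := by
  have hjensen : ∀ ω, ENNReal.ofReal (Real.exp (lam * (degB n (Y ω) i / n))) ≤
      ∑ j ∈ Finset.range n,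
        ENNReal.ofReal (n : ℝ)⁻¹ * ENNReal.ofReal (Real.exp (lam * Y ω i j)) := by
    intro ω
    simp only [← ENNReal.ofReal_mul (inv_nonneg.2 (Nat.cast_nonneg n))]
    rw [← ENNReal.ofReal_sum_of_nonneg fun _ _ => by positivity, ← Finset.mul_sum,
      ← div_eq_inv_mul]
    refine ENNReal.ofReal_le_ofReal ((le_of_eq ?_).trans (exp_sum_div_le_sum_exp_div hn _))
    rw [← Finset.mul_sum, mul_div_assoc, degB, Nat.cast_sum]
  have hmeas : ∀ j, Measurable fun ω => ENNReal.ofReal (Real.exp (lam * Y ω i j)) := fun j =>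
    (measurable_from_nat (f := fun k : ℕ => ENNReal.ofReal (Real.exp (lam * k)))).comp (hY j)
  calc ∫⁻ ω, ENNReal.ofReal (Real.exp (lam * (degB n (Y ω) i / n))) ∂μ
      ≤ ∫⁻ ω, ∑ j ∈ Finset.range n,
          ENNReal.ofReal (n : ℝ)⁻¹ * ENNReal.ofReal (Real.exp (lam * Y ω i j)) ∂μ :=
        lintegral_mono hjensen
    _ = ∑ j ∈ Finset.range n,
          ENNReal.ofReal (n : ℝ)⁻¹ * ∫⁻ ω, ENNReal.ofReal (Real.exp (lam * Y ω i j)) ∂μ := by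
        rw [lintegral_finsetSum _ fun j _ => (hmeas j).const_mul _]
        exact Finset.sum_congr rfl fun j _ => lintegral_const_mul _ (hmeas j)
    _ ≤ ∑ j ∈ Finset.range n, ENNReal.ofReal (n : ℝ)⁻¹ * ENNReal.ofReal C := by
        gcongr with j hj
        exact hmom j (Finset.mem_range.1 hj)
    _ = ENNReal.ofReal C := by
        rw [Finset.sum_const, Finset.card_range, nsmul_eq_mul, ← mul_assoc,
          ← ENNReal.ofReal_natCast, ← ENNReal.ofReal_mul (Nat.cast_nonneg n),
          mul_inv_cancel₀ (by positivity), ENNReal.ofReal_one, one_mul]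

lemma IsEdgeReconnecting.measurableSet_preimage_singleton
    (hX : IsEdgeReconnecting κ μ n m X) (T : ℕ) (B : ℕ → ℕ → ℕ) :
    MeasurableSet (X T ⁻¹' {B}) := by
  have hentries : X T ⁻¹' {B} = ⋂ (a) (b), (fun ω => X T ω a b) ⁻¹' {B a b} := by
    ext ω
    simp [funext_iff]
  rw [hentries]
  exact .iInter fun a => .iInter fun b => hX.1 T a b (measurableSet_singleton _)

lemma IsEdgeReconnecting.isMarkovChain (hX : IsEdgeReconnecting κ μ n m X) :
    IsMarkovChain μ X fun B B' => ENNReal.ofReal (transER κ n m B B') :=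
  hX.2.2

theorem IsEdgeReconnecting.measure_exists_degB_ge_le (hX : IsEdgeReconnecting κ μ n m X)
    (hκ : 0 ≤ κ) {lam C : ℝ} (hlam : 0 ≤ lam) (hm : 0 < m)
    (hdrift : 2 * m * Real.exp (lam / n) ≤ 2 * m + n * κ) {i : ℕ} (hi : i < n)
    (hmom : ∀ j < n, ∫⁻ ω, ENNReal.ofReal (Real.exp (lam * X 0 ω i j)) ∂μ ≤ ENNReal.ofReal C)
    (z : ℝ) (N : ℕ) :
    μ {ω | ∃ T ≤ N, z ≤ (degB n (X T ω) i : ℝ) / n} ≤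
      ENNReal.ofReal C * ENNReal.ofReal (Real.exp (N * driftExponent κ lam n m)) *
        ENNReal.ofReal (Real.exp (-(lam * z))) := by
  set F := (finite_setOf_isAdjOnM n m).toFinset
  set g : (ℕ → ℕ → ℕ) → ℝ≥0∞ := fun B => ENNReal.ofReal (Real.exp (lam * (degB n B i / n)))
  have hXF : ∀ T ω, X T ω ∈ F := fun T ω => (Set.Finite.mem_toFinset _).2 (hX.2.1 T ω)
  have hdriftF : ∀ B ∈ F, ∑ B' ∈ F, ENNReal.ofReal (transER κ n m B B') * g B' ≤
      ENNReal.ofReal (Real.exp (driftExponent κ lam n m)) * g B := by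
    intro B hB
    simp only [g, ← ENNReal.ofReal_mul (transER_nonneg hκ _ _),
      ← ENNReal.ofReal_mul (Real.exp_pos _).le]
    rw [← ENNReal.ofReal_sum_of_nonneg fun B' _ =>
      mul_nonneg (transER_nonneg hκ _ _) (Real.exp_pos _).le]
    have hB' : IsAdjOnM n m B := by simpa [F] using hB
    exact ENNReal.ofReal_le_ofReal (sum_transER_mul_exp_degB_le hκ hlam hm hdrift hB' hi F)
  set U := {B : ℕ → ℕ → ℕ | z ≤ (degB n B i : ℝ) / n}
  have hthreshold : ∀ B ∈ U, ENNReal.ofReal (Real.exp (lam * z)) ≤ g B := fun B hB =>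
    ENNReal.ofReal_le_ofReal (Real.exp_le_exp.2 (mul_le_mul_of_nonneg_left hB hlam))
  have hmaximal := hX.isMarkovChain.mul_measure_exists_mem_le hXF
    hX.measurableSet_preimage_singleton
    (ENNReal.one_le_ofReal.2 (Real.one_le_exp (driftExponent_nonneg hκ hlam n m)))
    hdriftF hthreshold N
  have hinitial := lintegral_exp_degB_div_le (μ := μ) (pos_of_gt hi) (fun j => hX.1 0 i j) hmom
  rw [← ENNReal.ofReal_pow (Real.exp_pos _).le, ← Real.exp_nat_mul] at hmaximal
  calc μ {ω | ∃ T ≤ N, z ≤ (degB n (X T ω) i : ℝ) / n}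
      = ENNReal.ofReal (Real.exp (-(lam * z))) *
          (ENNReal.ofReal (Real.exp (lam * z)) * μ {ω | ∃ T ≤ N, X T ω ∈ U}) := by
        rw [← mul_assoc, ← ENNReal.ofReal_mul (Real.exp_pos _).le, ← Real.exp_add,
          neg_add_cancel, Real.exp_zero, ENNReal.ofReal_one, one_mul]
        rfl
    _ ≤ ENNReal.ofReal (Real.exp (-(lam * z))) *
          (ENNReal.ofReal (Real.exp (N * driftExponent κ lam n m)) * ENNReal.ofReal C) := by
        exact mul_le_mul_right (hmaximal.trans (mul_le_mul_right hinitial _)) _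
    _ = _ := by ring

end EdgeReconnecting

theorem degree_exponential_tail_general
    (κ ρ : ℝ) (hκ : 0 < κ) (hρ : 0 < ρ)
    (Ω : ℕ → Type) [∀ n, MeasurableSpace (Ω n)]
    (μ : ∀ n, Measure (Ω n))
    (m : ℕ → ℕ) (X : ∀ n, ℕ → Ω n → ℕ → ℕ → ℕ)
    (hER : ∀ n, IsEdgeReconnecting κ (μ n) n (m n) (X n))
    (hm : Tendsto (fun n => (2 * (m n : ℝ)) / (n : ℝ) ^ 2) atTop (𝓝 ρ))
    (lam C : ℝ) (hlam : 0 < lam) (hlamκρ : lam < κ / ρ)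
    (hmom : ∀ n, ∀ i < n, ∀ j < n,
      ∫⁻ ω, ENNReal.ofReal (Real.exp (lam * (X n 0 ω i j : ℝ))) ∂(μ n) ≤ ENNReal.ofReal C) :
    ∃ n' : ℕ, ∀ t z : ℝ, 0 ≤ t → 0 ≤ z → ∀ n, n' ≤ n → ∀ i < n,
      μ n {ω | ∃ T : ℕ, (T : ℝ) ≤ 2 * (m n : ℝ) * (n : ℝ) * t ∧
          z ≤ (degB n (X n T ω) i : ℝ) / (n : ℝ)}
        ≤ ENNReal.ofReal (C * Real.exp (2 * lam * κ * t) * Real.exp (-(lam * z))) := by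
  obtain ⟨n', hn'⟩ := eventually_atTop.1 (eventually_pos_and_drift_le (κ := κ) hρ hlamκρ hm)
  refine ⟨n', fun t z ht hz n hn i hi => ?_⟩
  obtain ⟨hm_pos, hdrift⟩ := hn' n hn
  set N := ⌊2 * (m n : ℝ) * n * t⌋₊
  have hN : N * driftExponent κ lam n (m n) ≤ 2 * lam * κ * t :=
    (floor_mul_driftExponent_le hκ.le hlam.le (pos_of_gt hi) hm_pos hdrift ht).trans
      (by nlinarith [mul_pos hlam hκ])
  have hevent : {ω | ∃ T : ℕ, (T : ℝ) ≤ 2 * (m n : ℝ) * n * t ∧ z ≤ (degB n (X n T ω) i : ℝ) / n}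
      = {ω | ∃ T ≤ N, z ≤ (degB n (X n T ω) i : ℝ) / n} := by
    ext ω
    simp only [Set.mem_ofPred_eq, N, Nat.le_floor_iff (by positivity : (0 : ℝ) ≤ 2 * m n * n * t)]
  rw [hevent, ENNReal.ofReal_mul' (Real.exp_pos _).le, ENNReal.ofReal_mul' (Real.exp_pos _).le]
  exact ((hER n).measure_exists_degB_ge_le hκ.le hlam.le hm_pos hdrift hi (hmom n i hi) z N).trans
    (by gcongr)

/-- Lemma 4.1 (i): exponential tail bound for the maximal normalized degree. -/
theorem degree_exponential_tail
    (κ ρ : ℝ) (hκ : 0 < κ) (hρ : 0 < ρ)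
    (Ω : ℕ → Type) [∀ n, MeasurableSpace (Ω n)]
    (μ : ∀ n, Measure (Ω n)) (hprob : ∀ n, IsProbabilityMeasure (μ n))
    (m : ℕ → ℕ) (X : ∀ n, ℕ → Ω n → ℕ → ℕ → ℕ)
    (hER : ∀ n, IsEdgeReconnecting κ (μ n) n (m n) (X n))
    (hexch : ∀ n, VertexExchangeable (μ n) n (X n 0))
    (hm : Tendsto (fun n => (2 * (m n : ℝ)) / (n : ℝ) ^ 2) atTop (𝓝 ρ))
    (lam C : ℝ) (hlam : 0 < lam) (hlamκρ : lam < κ / ρ)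
    (hmom : ∀ n, ∀ i < n, ∀ j < n,
      ∫⁻ ω, ENNReal.ofReal (Real.exp (lam * (X n 0 ω i j : ℝ))) ∂(μ n) ≤ ENNReal.ofReal C) :
    ∃ n' : ℕ, ∀ t z : ℝ, 0 ≤ t → 0 ≤ z → ∀ n, n' ≤ n → ∀ i < n,
      μ n {ω | ∃ T : ℕ, (T : ℝ) ≤ 2 * (m n : ℝ) * (n : ℝ) * t ∧
          z ≤ (degB n (X n T ω) i : ℝ) / (n : ℝ)}
        ≤ ENNReal.ofReal (C * Real.exp (2 * lam * κ * t) * Real.exp (-(lam * z))) :=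
  degree_exponential_tail_general κ ρ hκ hρ Ω μ m X hER hm lam C hlam hlamκρ hmom
end
end

section
/- Let Y_t be the M/M/∞ queue with arrival rate μ ≥ 0 and service rate 1, started from Y_0 = h ∈ ℕ, i.e. P(Y_t = k | Y_0 = h) = q(t,h,k,μ). Then for all t ≥ 0 and all l ∈ ℕ: | q(t,h,l,μ) − lim_{s→∞} q(s,h,l,μ) | = | q(t,h,l,μ) − p(l,μ) | ≤ e^{−t}·(h + μ). -/
open MeasureTheory Filter Set
open scoped Classical ENNReal Topology BigOperators

noncomputable section

/- ### Auxiliary lemmas for Lemma 4.2 -/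

lemma poiP_nonneg' (k : ℕ) {a : ℝ} (ha : 0 ≤ a) : 0 ≤ poiP k a := by
  unfold poiP
  positivity

lemma pow_div_factorial_le_exp' {a : ℝ} (ha : 0 ≤ a) (k : ℕ) :
    a ^ k / (Nat.factorial k : ℝ) ≤ Real.exp a := by
  calc a ^ k / (Nat.factorial k : ℝ)
      ≤ ∑ i ∈ Finset.range (k + 1), a ^ i / (Nat.factorial i : ℝ) := by
        apply Finset.single_le_sum (f := fun i => a ^ i / (Nat.factorial i : ℝ))
        · intro i _; positivity
        · simp
    _ ≤ Real.exp a := Real.sum_le_exp_of_nonneg ha _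

lemma poiP_le_one' (k : ℕ) {a : ℝ} (ha : 0 ≤ a) : poiP k a ≤ 1 := by
  have h1 := pow_div_factorial_le_exp' ha k
  have h2 : (0:ℝ) < Real.exp (-a) := Real.exp_pos _
  have h3 : Real.exp (-a) * (a ^ k / (Nat.factorial k : ℝ)) ≤ Real.exp (-a) * Real.exp a :=
    mul_le_mul_of_nonneg_left h1 h2.le
  rw [← Real.exp_add, neg_add_cancel, Real.exp_zero] at h3
  unfold poiP
  rw [mul_div_assoc]
  linarith [h3]

lemma poiP_sum_le' {a : ℝ} (ha : 0 ≤ a) (N : ℕ) :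
    ∑ k ∈ Finset.range N, poiP k a ≤ 1 := by
  have h0 : ∑ k ∈ Finset.range N, poiP k a
      = Real.exp (-a) * ∑ k ∈ Finset.range N, a ^ k / (Nat.factorial k : ℝ) := by
    rw [Finset.mul_sum]; apply Finset.sum_congr rfl; intro k _; unfold poiP; ring
  rw [h0]
  have h1 := Real.sum_le_exp_of_nonneg ha N
  have h2 : (0:ℝ) < Real.exp (-a) := Real.exp_pos _
  calc Real.exp (-a) * ∑ k ∈ Finset.range N, a ^ k / (Nat.factorial k : ℝ)
      ≤ Real.exp (-a) * Real.exp a := mul_le_mul_of_nonneg_left h1 h2.le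
    _ = 1 := by rw [← Real.exp_add, neg_add_cancel, Real.exp_zero]

lemma poi_conv' {a b : ℝ} (l : ℕ) :
    ∑ m ∈ Finset.range (l + 1), poiP m a * poiP (l - m) b = poiP l (a + b) := by
  unfold poiP
  rw [show -(a+b) = -a + -b by ring, Real.exp_add, add_pow]
  rw [mul_comm, Finset.sum_mul, Finset.sum_div]
  apply Finset.sum_congr rfl
  intro m hm
  have hml : m ≤ l := Nat.lt_succ_iff.mp (Finset.mem_range.mp hm)
  rw [Nat.cast_choose ℝ hml]
  have h1 : (Nat.factorial m : ℝ) ≠ 0 := Nat.cast_ne_zero.mpr (Nat.factorial_ne_zero m)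
  have h2 : (Nat.factorial (l - m) : ℝ) ≠ 0 := Nat.cast_ne_zero.mpr (Nat.factorial_ne_zero _)
  have h3 : (Nat.factorial l : ℝ) ≠ 0 := Nat.cast_ne_zero.mpr (Nat.factorial_ne_zero l)
  have h4 : Real.exp a ≠ 0 := Real.exp_ne_zero a
  have h5 : Real.exp b ≠ 0 := Real.exp_ne_zero b
  rw [Real.exp_neg, Real.exp_neg]
  field_simp

lemma binP_nonneg' (k n : ℕ) {p : ℝ} (hp0 : 0 ≤ p) (hp1 : p ≤ 1) : 0 ≤ binP k n p := by
  unfold binP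
  have : (0:ℝ) ≤ 1 - p := by linarith
  positivity

lemma binP_sum_eq' (n : ℕ) (p : ℝ) :
    ∑ k ∈ Finset.range (n + 1), binP k n p = 1 := by
  have h := add_pow p (1 - p) n
  rw [show p + (1 - p) = 1 by ring, one_pow] at h
  calc ∑ k ∈ Finset.range (n + 1), binP k n p
      = ∑ k ∈ Finset.range (n + 1), p ^ k * (1 - p) ^ (n - k) * (n.choose k : ℝ) := by
        apply Finset.sum_congr rfl; intro k _; unfold binP; ring
    _ = 1 := h.symm

lemma binP_sum_le' (n : ℕ) {p : ℝ} (hp0 : 0 ≤ p) (hp1 : p ≤ 1) (N : ℕ) :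
    ∑ k ∈ Finset.range N, binP k n p ≤ 1 := by
  have hsub : Finset.range N ⊆ Finset.range (max N (n + 1)) :=
    Finset.range_subset_range.mpr (le_max_left _ _)
  have h1 : ∑ k ∈ Finset.range N, binP k n p
      ≤ ∑ k ∈ Finset.range (max N (n + 1)), binP k n p :=
    Finset.sum_le_sum_of_subset_of_nonneg hsub (fun k _ _ => binP_nonneg' k n hp0 hp1)
  have h2 : ∑ k ∈ Finset.range (max N (n + 1)), binP k n p
      = ∑ k ∈ Finset.range (n + 1), binP k n p := by
    symm
    apply Finset.sum_subset (Finset.range_subset_range.mpr (le_max_right _ _))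
    intro k _ hk
    have : n < k := by
      simp only [Finset.mem_range, not_lt] at hk
      omega
    unfold binP
    rw [Nat.choose_eq_zero_of_lt this]
    simp
  rw [h2, binP_sum_eq'] at h1
  exact h1

lemma subprob_abs_le (l : ℕ) (c f : ℕ → ℝ) (hc : ∀ j, 0 ≤ c j)
    (hc1 : ∑ j ∈ Finset.range (l + 1), c j ≤ 1)
    (hf0 : ∀ j, 0 ≤ f j) (hf1 : ∀ j, f j ≤ 1) :
    |∑ j ∈ Finset.range (l + 1), c j * f j - f 0| ≤ 1 - c 0 := by
  have hsplit : ∑ j ∈ Finset.range (l + 1), c j * f j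
      = (∑ i ∈ Finset.range l, c (i + 1) * f (i + 1)) + c 0 * f 0 :=
    Finset.sum_range_succ' _ l
  have hsplit' : ∑ j ∈ Finset.range (l + 1), c j
      = (∑ i ∈ Finset.range l, c (i + 1)) + c 0 :=
    Finset.sum_range_succ' _ l
  have htail_nonneg : 0 ≤ ∑ i ∈ Finset.range l, c (i + 1) :=
    Finset.sum_nonneg fun i _ => hc _
  have htail_le : ∑ i ∈ Finset.range l, c (i + 1) * f (i + 1)
      ≤ ∑ i ∈ Finset.range l, c (i + 1) := by
    apply Finset.sum_le_sum
    intro i _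
    calc c (i + 1) * f (i + 1) ≤ c (i + 1) * 1 :=
          mul_le_mul_of_nonneg_left (hf1 _) (hc _)
      _ = c (i + 1) := mul_one _
  have htail_nonneg' : 0 ≤ ∑ i ∈ Finset.range l, c (i + 1) * f (i + 1) :=
    Finset.sum_nonneg fun i _ => mul_nonneg (hc _) (hf0 _)
  have hc0le : c 0 ≤ 1 := by nlinarith [hc 0]
  rw [abs_le]
  constructor
  · nlinarith [hf0 0, hf1 0, hc 0]
  · nlinarith [hf0 0, hf1 0, hc 0]

/-- Lemma 4.2: speed of convergence of the M/M/∞ queue to its stationary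
(Poisson) distribution. -/
theorem mm_infty_convergence_speed (μ : ℝ) (hμ : 0 ≤ μ) (h : ℕ) :
    (∀ l : ℕ, Tendsto (fun s : ℝ => qMM s h l μ) atTop (𝓝 (poiP l μ))) ∧
    ∀ t : ℝ, 0 ≤ t → ∀ l : ℕ,
      |qMM t h l μ - poiP l μ| ≤ Real.exp (-t) * ((h : ℝ) + μ) := by
  have key : ∀ t : ℝ, 0 ≤ t → ∀ l : ℕ,
      |qMM t h l μ - poiP l μ| ≤ Real.exp (-t) * ((h : ℝ) + μ) := by
    intro t ht l
    set ε := Real.exp (-t) with hεdef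
    have hε0 : 0 < ε := Real.exp_pos _
    have hε1 : ε ≤ 1 := Real.exp_le_one_iff.mpr (by linarith)
    set ν := (1 - ε) * μ with hνdef
    have hν0 : 0 ≤ ν := mul_nonneg (by linarith) hμ
    -- Step 1 : |q(t,h,l,μ) - p(l,ν)| ≤ 1 - (1-ε)^h
    have step1 : |qMM t h l μ - poiP l ν| ≤ 1 - binP 0 h ε := by
      have := subprob_abs_le l (fun j => binP j h ε) (fun j => poiP (l - j) ν)
        (fun j => binP_nonneg' j h hε0.le hε1)
        (binP_sum_le' h hε0.le hε1 (l + 1))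
        (fun j => poiP_nonneg' _ hν0) (fun j => poiP_le_one' _ hν0)
      simpa [qMM, Nat.sub_zero] using this
    -- Step 2 : |p(l,μ) - p(l,ν)| ≤ 1 - e^{-εμ}
    have step2 : |poiP l μ - poiP l ν| ≤ 1 - poiP 0 (ε * μ) := by
      have hconv : ∑ m ∈ Finset.range (l + 1), poiP m (ε * μ) * poiP (l - m) ν
          = poiP l μ := by
        rw [poi_conv' l]
        congr 1
        rw [hνdef]; ring
      have := subprob_abs_le l (fun m => poiP m (ε * μ)) (fun m => poiP (l - m) ν)
        (fun m => poiP_nonneg' _ (mul_nonneg hε0.le hμ))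
        (poiP_sum_le' (mul_nonneg hε0.le hμ) (l + 1))
        (fun m => poiP_nonneg' _ hν0) (fun m => poiP_le_one' _ hν0)
      rw [hconv] at this
      simpa [Nat.sub_zero] using this
    have hb0 : binP 0 h ε = (1 - ε) ^ h := by
      unfold binP; simp
    have hp0 : poiP 0 (ε * μ) = Real.exp (-(ε * μ)) := by
      unfold poiP; simp
    have hBern : 1 - (h : ℝ) * ε ≤ (1 - ε) ^ h := by
      have := one_add_mul_le_pow (a := -ε) (by linarith) h
      calc 1 - (h : ℝ) * ε = 1 + (h : ℝ) * (-ε) := by ring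
        _ ≤ (1 + -ε) ^ h := this
        _ = (1 - ε) ^ h := by ring_nf
    have hExp : 1 - ε * μ ≤ Real.exp (-(ε * μ)) := by
      linarith [Real.add_one_le_exp (-(ε * μ))]
    calc |qMM t h l μ - poiP l μ|
        ≤ |qMM t h l μ - poiP l ν| + |poiP l ν - poiP l μ| := abs_sub_le _ _ _
      _ = |qMM t h l μ - poiP l ν| + |poiP l μ - poiP l ν| := by rw [abs_sub_comm (poiP l ν)]
      _ ≤ (1 - binP 0 h ε) + (1 - poiP 0 (ε * μ)) := add_le_add step1 step2
      _ ≤ (h : ℝ) * ε + ε * μ := by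
          rw [hb0, hp0]
          linarith [hBern, hExp]
      _ = ε * ((h : ℝ) + μ) := by ring
  refine ⟨?_, key⟩
  intro l
  rw [← tendsto_sub_nhds_zero_iff]
  have h0 : Tendsto (fun s : ℝ => Real.exp (-s) * ((h : ℝ) + μ)) atTop (𝓝 0) := by
    simpa using Real.tendsto_exp_neg_atTop_nhds_zero.mul_const ((h : ℝ) + μ)
  apply squeeze_zero_norm' _ h0
  filter_upwards [eventually_ge_atTop (0 : ℝ)] with s hs
  simpa [Real.norm_eq_abs] using key s hs l


end
end

section
/- Fix κ ∈ (0,∞) and a multigraphon W with ρ := ρ(W) ∈ (0,∞). For t > 0 let Ŵ_t be the multigraphon Ŵ_t(x,y,k) = p(k, F_t^{-1}(x)F_t^{-1}(y)/ρ) for x≠y and Ŵ_t(x,x,k) = 1[2|k]·p(k/2, F_t^{-1}(x)²/(2ρ)), where F_t(x) = ∫_0^x ∫_0^∞ f(t,z,y) dF_0(z) dy with the Cox–Ingersoll–Ross transition density f(t,z,y) (parameters κ,ρ) and F_0(x) = Leb{y∈[0,1] : D(W,y) ≤ x}. Let Ŵ_∞ be the multigraphon Ŵ_∞(x,y,k)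 = p(k, F^{-1}(x)F^{-1}(y)/ρ) for x≠y and Ŵ_∞(x,x,k) = 1[2|k]·p(k/2, F^{-1}(x)²/(2ρ)), where F(x) = ∫_0^x g(y, κ, κ/ρ) dy is the Gamma(κ, κ/ρ) distribution function. Then for every k ∈ ℕ and every A ∈ A_k: lim_{t→∞} t_=(A, Ŵ_t) = t_=(A, Ŵ_∞). -/
/-!
`Ŵ_t` and `Ŵ_∞` are Poisson multigraphons driven by the quantile functions `F_t⁻¹` and `F⁻¹`,
with every fibre in `[0,1]`, so by dominated convergence it suffices that
`F_t⁻¹(u) → F⁻¹(u)` for every `u ∈ (0,1)`.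
As `t → ∞`, `τ(α,t) → 0`, so in the series defining the CIR density only the `i = 0` term
survives and `f(t,z,y) → g(y,κ,α)`, with a bound `C y^(κ-1)` uniform in `t ≥ 1` and `z ≥ 0`.
Integrating against `dF₀` and then over `(0,x]` gives `F_t(x) → F(x)` for every `x`. Since `F` is
strictly increasing on `[0,∞)`, this pointwise convergence of distribution functions implies
convergence of their generalized inverses at every level `u ∈ (0,1)`.
-/

open MeasureTheory Filter Set
open scoped Classical ENNReal Topology BigOperators

noncomputable section

/-- Generalized inverse of the `Gamma(κ, κ/ρ)` distribution function. -/
def FgammaInv (κ ρ : ℝ) (x : ℝ) : ℝ :=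
  sInf {z : ℝ | x ≤ ∫ y in Ioc (0:ℝ) z, gamP y κ (κ / ρ)}

/-- The stationary multigraphon `Ŵ_∞`: Poisson fibres driven by `F⁻¹` with `F = Gamma(κ,κ/ρ)`. -/
def WhatInfER (κ ρ : ℝ) : ℝ → ℝ → ℕ → ℝ := fun x y k =>
  if x = y then
    (if 2 ∣ k then poiP (k / 2) (FgammaInv κ ρ x ^ 2 / (2 * ρ)) else 0)
  else poiP k (FgammaInv κ ρ x * FgammaInv κ ρ y / ρ)

open ProbabilityTheory

section GeneralizedInverse

variable {g : ℝ → ℝ} {u : ℝ}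

lemma sInf_setOf_le_nonneg (hg : ∀ z < 0, g z < u) : 0 ≤ sInf {z | u ≤ g z} :=
  Real.sInf_nonneg fun z hz => not_lt.1 fun h => (hg z h).not_ge hz

lemma measurable_sInf_setOf_le :
    Measurable fun x => sInf {z | x ≤ g z} := by
  set V : Set ℝ := {x | {z | x ≤ g z}.Nonempty ∧ BddBelow {z | x ≤ g z}}
  have hV : V.OrdConnected := ⟨fun a ha b hb x hx =>
    ⟨hb.1.mono fun z hz => hx.2.trans hz, ha.2.mono fun z hz => hx.1.trans hz⟩⟩
  have hmono : Monotone (V.domRestrict fun x => sInf {z | x ≤ g z}) := fun a b hab =>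
    csInf_le_csInf a.2.2 b.2.1 fun z hz => (show (a : ℝ) ≤ b from hab).trans hz
  -- off `V` the set is empty or unbounded below, and `sInf` takes its junk value `0`
  have hjunk : (Vᶜ).domRestrict (fun x => sInf {z | x ≤ g z}) = fun _ => 0 := by
    funext ⟨x, hx⟩
    rcases not_and_or.1 hx with h | h
    · simp [not_nonempty_iff_eq_empty.1 h]
    · exact Real.sInf_of_not_bddBelow h
  exact measurable_of_restrict_of_restrict_compl hV.measurableSet hmono.measurable
    (hjunk ▸ measurable_const)

lemma tendsto_sInf_setOf_le {ι : Type*} {l : Filter ι} {G : ι → ℝ → ℝ} {q : ℝ}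
    (hG : ∀ᶠ i in l, Monotone (G i)) (hlim : ∀ z, Tendsto (fun i => G i z) l (𝓝 (g z)))
    (hbelow : ∀ z < q, g z < u) (habove : ∀ z, q < z → u < g z) :
    Tendsto (fun i => sInf {z | u ≤ G i z}) l (𝓝 q) := by
  have hlow : ∀ a < q, ∀ᶠ i in l, ∀ z, u ≤ G i z → a < z := fun a ha => by
    filter_upwards [hG, (hlim a).eventually (eventually_lt_nhds (hbelow a ha))] with i hmono hi z hz
    exact lt_of_not_ge fun h => (hmono h).not_gt (hi.trans_le hz)
  have hup : ∀ b, q < b → ∀ᶠ i in l, u < G i b := fun b hb =>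
    (hlim b).eventually (eventually_gt_nhds (habove b hb))
  refine tendsto_order.2 ⟨fun a ha => ?_, fun b hb => ?_⟩
  · obtain ⟨m, ham, hmq⟩ := exists_between ha
    filter_upwards [hlow m hmq, hup (q + 1) (by linarith)] with i hi hne
    exact ham.trans_le (le_csInf ⟨q + 1, hne.le⟩ fun z hz => (hi z hz).le)
  · obtain ⟨m, hqm, hmb⟩ := exists_between hb
    filter_upwards [hlow (q - 1) (by linarith), hup m hqm] with i hi hm
    exact (csInf_le ⟨q - 1, fun z hz => (hi z hz).le⟩ hm.le).trans_lt hmb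

lemma sInf_setOf_le_quantile (hg : StrictMonoOn g (Ici 0)) (hg0 : ∀ z ≤ 0, g z = 0)
    (hg1 : Tendsto g atTop (𝓝 1)) (hu : u ∈ Ioo 0 1) :
    (∀ z < sInf {z | u ≤ g z}, g z < u) ∧ ∀ z, sInf {z | u ≤ g z} < z → u < g z := by
  have hpos : ∀ z, u ≤ g z → 0 < z := fun z hz =>
    lt_of_not_ge fun h => (hg0 z h ▸ hz).not_gt hu.1
  have hbdd : BddBelow {z | u ≤ g z} := ⟨0, fun z hz => (hpos z hz).le⟩
  have hne : {z | u ≤ g z}.Nonempty := ((hg1.eventually (eventually_gt_nhds hu.2)).exists).imp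
    fun _ h => h.le
  refine ⟨fun z hz => not_le.1 fun h => notMem_of_lt_csInf hz hbdd h, fun z hz => ?_⟩
  obtain ⟨w, hw, hwz⟩ := (csInf_lt_iff hbdd hne).1 hz
  exact hw.trans_lt (hg (mem_Ici.2 (hpos w hw).le) (mem_Ici.2 ((hpos w hw).trans hwz).le) hwz)

end GeneralizedInverse

section Poisson

lemma poiP_nonneg {l : ℝ} (hl : 0 ≤ l) (k : ℕ) : 0 ≤ poiP k l := by
  unfold poiP; positivity

lemma poiP_le_one {l : ℝ} (hl : 0 ≤ l) (k : ℕ) : poiP k l ≤ 1 := by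
  rw [poiP, mul_div_assoc]
  calc Real.exp (-l) * (l ^ k / (Nat.factorial k : ℝ)) ≤ Real.exp (-l) * Real.exp l :=
        mul_le_mul_of_nonneg_left (Real.pow_div_factorial_le_exp l hl k) (Real.exp_pos _).le
    _ = 1 := by rw [← Real.exp_add, neg_add_cancel, Real.exp_zero]

@[fun_prop]
lemma continuous_poiP (k : ℕ) : Continuous (poiP k) := by
  unfold poiP; fun_prop

lemma poiP_zero_right (k : ℕ) : poiP k 0 = if k = 0 then 1 else 0 := by
  rcases eq_or_ne k 0 with rfl | hk <;> simp [poiP, *]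

end Poisson

def poissonMultigraphon (φ : ℝ → ℝ) (ρ : ℝ) : ℝ → ℝ → ℕ → ℝ := fun x y k =>
  if x = y then (if 2 ∣ k then poiP (k / 2) (φ x ^ 2 / (2 * ρ)) else 0)
  else poiP k (φ x * φ y / ρ)

section PoissonMultigraphon

variable {φ : ℝ → ℝ} {ρ : ℝ}

lemma measurable_poissonMultigraphon (hφ : Measurable φ) (k : ℕ) :
    Measurable fun p : ℝ × ℝ => poissonMultigraphon φ ρ p.1 p.2 k := by
  refine Measurable.ite (measurableSet_eq_fun measurable_fst measurable_snd) ?_ ?_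
  · split_ifs
    · exact (continuous_poiP _).measurable.comp (by fun_prop)
    · exact measurable_const
  · exact (continuous_poiP _).measurable.comp (by fun_prop)

lemma poissonMultigraphon_mem_Icc (hρ : 0 ≤ ρ) {x y : ℝ} (hx : 0 ≤ φ x) (hy : 0 ≤ φ y)
    (k : ℕ) : poissonMultigraphon φ ρ x y k ∈ Icc 0 1 := by
  unfold poissonMultigraphon
  split_ifs
  · exact ⟨poiP_nonneg (by positivity) _, poiP_le_one (by positivity) _⟩
  · exact ⟨le_rfl, zero_le_one⟩
  · exact ⟨poiP_nonneg (by positivity) _, poiP_le_one (by positivity) _⟩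

lemma tendsto_poissonMultigraphon {ι : Type*} {l : Filter ι} {φs : ι → ℝ → ℝ} {x y : ℝ}
    (hx : Tendsto (fun i => φs i x) l (𝓝 (φ x))) (hy : Tendsto (fun i => φs i y) l (𝓝 (φ y)))
    (k : ℕ) :
    Tendsto (fun i => poissonMultigraphon (φs i) ρ x y k) l
      (𝓝 (poissonMultigraphon φ ρ x y k)) := by
  unfold poissonMultigraphon
  split_ifs
  · exact ((continuous_poiP _).tendsto _).comp ((hx.pow 2).div_const _)
  · exact tendsto_const_nhds
  · exact ((continuous_poiP _).tendsto _).comp ((hx.mul hy).div_const _)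

end PoissonMultigraphon

lemma ae_restrict_unitCube_mem_Ioo (k : ℕ) :
    ∀ᵐ x ∂(volume.restrict (univ.pi fun _ : Fin k => Icc (0:ℝ) 1)), ∀ i, x i ∈ Ioo (0:ℝ) 1 := by
  have h : (univ.pi fun _ : Fin k => Ioo (0:ℝ) 1) =ᵐ[volume] univ.pi fun _ => Icc (0:ℝ) 1 := by
    rw [volume_pi, pi_univ_Icc]
    exact Measure.univ_pi_Ioo_ae_eq_Icc
  rw [← Measure.restrict_congr_set h]
  filter_upwards [ae_restrict_mem (MeasurableSet.univ_pi fun _ => measurableSet_Ioo)] with x hx i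
  exact hx i (mem_univ i)

lemma tendsto_tEqW_of_tendsto {ι : Type*} {l : Filter ι} [l.IsCountablyGenerated]
    {W : ι → ℝ → ℝ → ℕ → ℝ} {W' : ℝ → ℝ → ℕ → ℝ} (k : ℕ) (A : ℕ → ℕ → ℕ)
    (hmeas : ∀ᶠ i in l, ∀ n, Measurable fun p : ℝ × ℝ => W i p.1 p.2 n)
    (hbound : ∀ᶠ i in l, ∀ x ∈ Ioo (0:ℝ) 1, ∀ y ∈ Ioo (0:ℝ) 1, ∀ n, W i x y n ∈ Icc 0 1)
    (hlim : ∀ x ∈ Ioo (0:ℝ) 1, ∀ y ∈ Ioo (0:ℝ) 1, ∀ n,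
      Tendsto (fun i => W i x y n) l (𝓝 (W' x y n))) :
    Tendsto (fun i => tEqW k A (W i)) l (𝓝 (tEqW k A W')) := by
  refine tendsto_integral_filter_of_dominated_convergence (fun _ => 1) ?_ ?_ ?_ ?_
  · filter_upwards [hmeas] with i hi
    refine (Finset.measurable_prod _ fun a _ => Finset.measurable_prod _ fun b _ => ?_)
      |>.aestronglyMeasurable
    exact (hi (A a b)).comp (f := fun x : Fin k → ℝ => (x a, x b)) (by fun_prop)
  · filter_upwards [hbound] with i hi
    filter_upwards [ae_restrict_unitCube_mem_Ioo k] with x hx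
    rw [norm_prod]
    refine Finset.prod_le_one (fun _ _ => norm_nonneg _) fun a _ => ?_
    rw [norm_prod]
    refine Finset.prod_le_one (fun _ _ => norm_nonneg _) fun b _ => ?_
    have h := hi _ (hx a) _ (hx b) (A a b)
    rw [Real.norm_of_nonneg h.1]
    exact h.2
  · exact integrableOn_const (isCompact_univ_pi fun _ => isCompact_Icc).measure_lt_top.ne
  · filter_upwards [ae_restrict_unitCube_mem_Ioo k] with x hx
    exact tendsto_finsetProd _ fun a _ => tendsto_finsetProd _ fun b _ =>
      hlim _ (hx a) _ (hx b) _

section Gamma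

variable {a b : ℝ}

lemma gamP_eq_indicator (a b : ℝ) :
    (fun y => gamP y a b) = (Ioi 0).indicator (gammaPDFReal a b) := by
  funext y
  by_cases hy : 0 < y
  · simp only [gamP, gammaPDFReal, if_pos hy, if_pos hy.le, indicator_of_mem (mem_Ioi.2 hy)]
    ring
  · simp [gamP, hy]

lemma measurable_gamP (a b : ℝ) : Measurable fun y => gamP y a b :=
  gamP_eq_indicator a b ▸ (measurable_gammaPDFReal a b).indicator measurableSet_Ioi

lemma gamP_nonneg (ha : 0 < a) (hb : 0 < b) (y : ℝ) : 0 ≤ gamP y a b := by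
  rw [show gamP y a b = _ from congrFun (gamP_eq_indicator a b) y]
  exact indicator_nonneg (fun y _ => gammaPDFReal_nonneg ha hb y) y

lemma setIntegral_Ioc_gamP (ha : 0 < a) (hb : 0 < b) (z : ℝ) :
    ∫ y in Ioc (0:ℝ) z, gamP y a b = cdf (gammaMeasure a b) z := by
  have hsupp : (Ici 0).indicator (gammaPDFReal a b) = gammaPDFReal a b :=
    indicator_eq_self.2 fun y hy => mem_Ici.2 <| not_lt.1 fun h =>
      hy (by simp [gammaPDFReal, not_le.2 h])
  rw [cdf_gammaMeasure_eq_integral ha hb, ← hsupp, setIntegral_indicator measurableSet_Ici,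
    Iic_inter_Ici, ← setIntegral_congr_set Ioc_ae_eq_Icc, gamP_eq_indicator,
    setIntegral_indicator measurableSet_Ioi, inter_eq_left.2 Ioc_subset_Ioi_self]

lemma strictMonoOn_cdf_gammaMeasure (ha : 0 < a) (hb : 0 < b) :
    StrictMonoOn (cdf (gammaMeasure a b)) (Ici 0) := by
  have := isProbabilityMeasure_gammaMeasure ha hb
  intro x hx y _ hxy
  have hsupp : {z | gammaPDF a b z ≠ 0} ∩ Ioc x y = Ioc x y := inter_eq_right.2 fun z hz =>
    (ENNReal.ofReal_pos.2 (gammaPDFReal_pos ha hb (lt_of_le_of_lt hx hz.1))).ne'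
  have hpos : gammaMeasure a b (Ioc x y) ≠ 0 := by
    rw [gammaMeasure, Ne, withDensity_apply_eq_zero' (by unfold gammaPDF; fun_prop), hsupp,
      Real.volume_Ioc]
    simpa using hxy
  rwa [← measure_cdf (μ := gammaMeasure a b), StieltjesFunction.measure_Ioc, Ne,
    ENNReal.ofReal_eq_zero, not_le, sub_pos] at hpos

lemma cdf_gammaMeasure_quantile (ha : 0 < a) (hb : 0 < b) {u : ℝ} (hu : u ∈ Ioo 0 1) :
    (∀ z < sInf {z | u ≤ cdf (gammaMeasure a b) z}, cdf (gammaMeasure a b) z < u) ∧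
      ∀ z, sInf {z | u ≤ cdf (gammaMeasure a b) z} < z → u < cdf (gammaMeasure a b) z := by
  have := isProbabilityMeasure_gammaMeasure ha hb
  refine sInf_setOf_le_quantile (strictMonoOn_cdf_gammaMeasure ha hb) (fun z hz => ?_)
    (tendsto_cdf_atTop _) hu
  rw [← setIntegral_Ioc_gamP ha hb, Ioc_eq_empty (not_lt.2 hz), Measure.restrict_empty,
    integral_zero_measure]

lemma FgammaInv_eq {κ ρ : ℝ} (hκ : 0 < κ) (hρ : 0 < ρ) (u : ℝ) :
    FgammaInv κ ρ u = sInf {z | u ≤ cdf (gammaMeasure κ (κ / ρ)) z} := by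
  simp only [FgammaInv, setIntegral_Ioc_gamP hκ (div_pos hκ hρ)]

end Gamma

def cirTerm (κ ρ t z y : ℝ) (i : ℕ) : ℝ :=
  poiP i (z * tauCIR (κ / ρ) t) * gamP y (κ + i) (tauCIR (κ / ρ) t + κ / ρ)

/-- Bounds `cirTerm κ ρ t z y i / y ^ (κ - 1)` uniformly in `t ≥ 1`, `z ≥ 0`, `0 < y ≤ M`:
for `t ≥ 1` the rate `τ(α,t) + α` lies in `(0, τ(α,1) + α]`. -/
def cirMajorant (κ ρ M : ℝ) (i : ℕ) : ℝ :=
  (tauCIR (κ / ρ) 1 + κ / ρ) ^ κ * ((M * (tauCIR (κ / ρ) 1 + κ / ρ)) ^ i / Real.Gamma (κ + i))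

section CIR

variable {κ ρ : ℝ}

lemma tauCIR_pos {a t : ℝ} (ha : 0 < a) (ht : 0 < t) : 0 < tauCIR a t :=
  div_pos ha (sub_pos.2 (Real.one_lt_exp_iff.2 (mul_pos ha ht)))

lemma tauCIR_le_tauCIR {a s t : ℝ} (ha : 0 < a) (hs : 0 < s) (hst : s ≤ t) :
    tauCIR a t ≤ tauCIR a s := by
  refine div_le_div_of_nonneg_left ha.le (sub_pos.2 (Real.one_lt_exp_iff.2 (mul_pos ha hs))) ?_
  gcongr

lemma tendsto_tauCIR_atTop {a : ℝ} (ha : 0 < a) : Tendsto (tauCIR a) atTop (𝓝 0) :=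
  tendsto_const_nhds.div_atTop <| tendsto_atTop_add_const_right _ _ <|
    Real.tendsto_exp_atTop.comp (tendsto_id.const_mul_atTop ha)

lemma continuousAt_gamP_rate {a y b : ℝ} (hy : 0 < y) (hb : 0 < b) :
    ContinuousAt (fun b => gamP y a b) b := by
  simp only [gamP, if_pos hy]
  exact continuousAt_const.mul (((Real.continuousAt_rpow_const _ _ (Or.inl hb.ne')).mul
    (by fun_prop)).div_const _)

lemma gamP_add_nat_le {M B y b : ℝ} (hκ : 0 < κ) (hy : y ∈ Ioc 0 M) (hb : b ∈ Ioc 0 B)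
    (i : ℕ) : gamP y (κ + i) b ≤ y ^ (κ - 1) * (B ^ κ * ((M * B) ^ i / Real.Gamma (κ + i))) := by
  have hΓ : 0 < Real.Gamma (κ + i) := Real.Gamma_pos_of_pos (by positivity)
  calc gamP y (κ + i) b
      = y ^ (κ - 1) * (b ^ κ * ((y * b) ^ i * Real.exp (-(b * y)) / Real.Gamma (κ + i))) := by
        rw [gamP, if_pos hy.1, show κ + i - 1 = (κ - 1) + i by ring,
          Real.rpow_add hy.1, Real.rpow_add hb.1, Real.rpow_natCast, Real.rpow_natCast, mul_pow]
        ring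
    _ ≤ y ^ (κ - 1) * (B ^ κ * ((M * B) ^ i * 1 / Real.Gamma (κ + i))) := by
        obtain ⟨hy0, hyM⟩ := hy
        obtain ⟨hb0, hbB⟩ := hb
        have hexp : Real.exp (-(b * y)) ≤ 1 := Real.exp_le_one_iff.2 (by nlinarith)
        have hM : 0 ≤ M := by linarith
        have hB : 0 ≤ B := by linarith
        gcongr
    _ = y ^ (κ - 1) * (B ^ κ * ((M * B) ^ i / Real.Gamma (κ + i))) := by rw [mul_one]

lemma summable_pow_div_Gamma_add (hκ : 0 < κ) {c : ℝ} (hc : 0 ≤ c) :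
    Summable fun i : ℕ => c ^ i / Real.Gamma (κ + i) := by
  refine summable_of_ratio_norm_eventually_le (r := 1 / 2) (by norm_num) ?_
  filter_upwards [eventually_ge_atTop ⌈2 * c⌉₊] with i hi
  have hΓ : 0 < Real.Gamma (κ + i) := Real.Gamma_pos_of_pos (by positivity)
  have hc2 : 2 * c ≤ κ + i := (Nat.ceil_le.1 hi).trans (by linarith)
  rw [Nat.cast_succ, ← add_assoc, Real.Gamma_add_one (by positivity), Real.norm_of_nonneg
    (by positivity), Real.norm_of_nonneg (by positivity), pow_succ,
    div_le_iff₀ (by positivity)]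
  calc c ^ i * c = 1 / 2 * (c ^ i / Real.Gamma (κ + i)) * (Real.Gamma (κ + i) * (2 * c)) := by
        field_simp
    _ ≤ 1 / 2 * (c ^ i / Real.Gamma (κ + i)) * ((κ + i) * Real.Gamma (κ + i)) := by
        rw [mul_comm (κ + _)]; gcongr

variable {t z y : ℝ}

lemma cirTerm_nonneg (hκ : 0 < κ) (hρ : 0 < ρ) (ht : 0 < t) (hz : 0 ≤ z) (i : ℕ) :
    0 ≤ cirTerm κ ρ t z y i := by
  have := tauCIR_pos (div_pos hκ hρ) ht
  exact mul_nonneg (poiP_nonneg (by positivity) i) (gamP_nonneg (by positivity) (by positivity) y)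

lemma cirTerm_le (hκ : 0 < κ) (hρ : 0 < ρ) (ht : 1 ≤ t) (hz : 0 ≤ z) {M : ℝ}
    (hy : y ∈ Ioc 0 M) (i : ℕ) : cirTerm κ ρ t z y i ≤ y ^ (κ - 1) * cirMajorant κ ρ M i := by
  have hα : 0 < κ / ρ := div_pos hκ hρ
  have hτ : 0 < tauCIR (κ / ρ) t := tauCIR_pos hα (by linarith)
  have hrate : tauCIR (κ / ρ) t + κ / ρ ∈ Ioc 0 (tauCIR (κ / ρ) 1 + κ / ρ) :=
    ⟨by positivity, by linarith [tauCIR_le_tauCIR hα one_pos ht]⟩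
  calc cirTerm κ ρ t z y i ≤ 1 * gamP y (κ + i) (tauCIR (κ / ρ) t + κ / ρ) :=
        mul_le_mul_of_nonneg_right (poiP_le_one (by positivity) i)
          (gamP_nonneg (by positivity) hrate.1 y)
    _ ≤ y ^ (κ - 1) * cirMajorant κ ρ M i := (one_mul _).trans_le (gamP_add_nat_le hκ hy hrate i)

lemma summable_cirMajorant (hκ : 0 < κ) (hρ : 0 < ρ) {M : ℝ} (hM : 0 ≤ M) :
    Summable (cirMajorant κ ρ M) := by
  have := tauCIR_pos (div_pos hκ hρ) one_pos
  exact (summable_pow_div_Gamma_add hκ (by positivity)).mul_left _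

lemma cirDens_nonneg (hκ : 0 < κ) (hρ : 0 < ρ) (ht : 0 < t) (hz : 0 ≤ z) :
    0 ≤ cirDens κ ρ t z y :=
  tsum_nonneg (cirTerm_nonneg hκ hρ ht hz)

lemma cirDens_le (hκ : 0 < κ) (hρ : 0 < ρ) (ht : 1 ≤ t) (hz : 0 ≤ z) {M : ℝ}
    (hy : y ∈ Ioc 0 M) : cirDens κ ρ t z y ≤ y ^ (κ - 1) * ∑' i, cirMajorant κ ρ M i := by
  have hmaj := (summable_cirMajorant hκ hρ (hy.1.le.trans hy.2)).mul_left (y ^ (κ - 1))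
  rw [← tsum_mul_left]
  exact Summable.tsum_le_tsum (cirTerm_le hκ hρ ht hz hy)
    (hmaj.of_nonneg_of_le (cirTerm_nonneg hκ hρ (by linarith) hz) (cirTerm_le hκ hρ ht hz hy))
    hmaj

lemma tendsto_cirDens_atTop (hκ : 0 < κ) (hρ : 0 < ρ) (hz : 0 ≤ z) (hy : 0 < y) :
    Tendsto (fun t => cirDens κ ρ t z y) atTop (𝓝 (gamP y κ (κ / ρ))) := by
  have hα : 0 < κ / ρ := div_pos hκ hρ
  have hτ := tendsto_tauCIR_atTop hα
  have hlim : (∑' i : ℕ, poiP i 0 * gamP y (κ + i) (κ / ρ)) = gamP y κ (κ / ρ) := by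
    rw [tsum_eq_single 0 fun i hi => by simp [poiP_zero_right, hi]]
    simp [poiP_zero_right]
  rw [← hlim]
  refine tendsto_tsum_of_dominated_convergence (summable_cirMajorant hκ hρ hy.le |>.mul_left
    (y ^ (κ - 1))) (fun i => ?_) ?_
  · refine (((continuous_poiP i).tendsto 0).comp ?_).mul
      ((continuousAt_gamP_rate hy hα).tendsto.comp ?_)
    · simpa using hτ.const_mul z
    · simpa using hτ.add_const (κ / ρ)
  · filter_upwards [eventually_ge_atTop 1] with t ht i
    exact (Real.norm_of_nonneg (cirTerm_nonneg hκ hρ (by linarith) hz i)).trans_le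
      (cirTerm_le hκ hρ ht hz ⟨hy, le_rfl⟩ i)

lemma measurable_cirDens (κ ρ t : ℝ) : Measurable fun p : ℝ × ℝ => cirDens κ ρ t p.2 p.1 := by
  refine Measurable.tsum fun i => Measurable.mul ?_ ?_
  · exact (continuous_poiP i).measurable.comp (by fun_prop)
  · exact (measurable_gamP _ _).comp measurable_fst

end CIR

/-- `fCIRmix` and `Fcir`, for an arbitrary initial law `μ` in place of `F0meas W`:
`fCIRmix κ ρ W = cirMixDens κ ρ (F0meas W)` and `Fcir κ ρ W = cirMixCDF κ ρ (F0meas W)`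
hold by `rfl`. -/
def cirMixDens (κ ρ : ℝ) (μ : Measure ℝ) (t y : ℝ) : ℝ := ∫ z, cirDens κ ρ t z y ∂μ

def cirMixCDF (κ ρ : ℝ) (μ : Measure ℝ) (t x : ℝ) : ℝ :=
  ∫ y in Ioc (0:ℝ) x, cirMixDens κ ρ μ t y

section CIRMixture

variable {κ ρ t : ℝ} {μ : Measure ℝ}

lemma measurable_cirMixDens [SFinite μ] : Measurable (cirMixDens κ ρ μ t) :=
  (measurable_cirDens κ ρ t).stronglyMeasurable.integral_prod_right'.measurable

lemma integrableOn_cirMajorant_bound (hκ : 0 < κ) (x : ℝ) :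
    IntegrableOn (fun y => y ^ (κ - 1) * ∑' i, cirMajorant κ ρ x i) (Ioc 0 x) :=
  (intervalIntegral.intervalIntegrable_rpow' (by linarith) (a := 0) (b := x)).1.mul_const _

variable (hκ : 0 < κ) (hρ : 0 < ρ) (hμ : ∀ᵐ z ∂μ, 0 ≤ z)
include hκ hρ hμ

lemma cirMixDens_nonneg (ht : 0 < t) (y : ℝ) : 0 ≤ cirMixDens κ ρ μ t y :=
  integral_nonneg_of_ae (hμ.mono fun _ hz => cirDens_nonneg hκ hρ ht hz)

variable [IsProbabilityMeasure μ]

lemma cirMixDens_le (ht : 1 ≤ t) {M y : ℝ} (hy : y ∈ Ioc 0 M) :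
    cirMixDens κ ρ μ t y ≤ y ^ (κ - 1) * ∑' i, cirMajorant κ ρ M i := by
  have h := norm_integral_le_of_norm_le_const (μ := μ) (hμ.mono fun z hz =>
    (Real.norm_of_nonneg (cirDens_nonneg hκ hρ (by linarith) hz)).trans_le
      (cirDens_le hκ hρ ht hz hy))
  rw [probReal_univ, mul_one] at h
  exact (le_abs_self _).trans h

lemma tendsto_cirMixDens_atTop {y : ℝ} (hy : 0 < y) :
    Tendsto (fun t => cirMixDens κ ρ μ t y) atTop (𝓝 (gamP y κ (κ / ρ))) := by
  simpa [cirMixDens] using tendsto_integral_filter_of_dominated_convergence (μ := μ)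
    (fun _ => y ^ (κ - 1) * ∑' i, cirMajorant κ ρ y i)
    (Eventually.of_forall fun t =>
      ((measurable_cirDens κ ρ t).comp measurable_prodMk_left).aestronglyMeasurable)
    ((eventually_ge_atTop 1).mono fun t ht => hμ.mono fun z hz =>
      (Real.norm_of_nonneg (cirDens_nonneg hκ hρ (by linarith) hz)).trans_le
        (cirDens_le hκ hρ ht hz ⟨hy, le_rfl⟩))
    (integrable_const _) (hμ.mono fun z hz => tendsto_cirDens_atTop hκ hρ hz hy)

lemma cirMixDens_norm_le_ae (ht : 1 ≤ t) (x : ℝ) :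
    ∀ᵐ y ∂volume.restrict (Ioc 0 x), ‖cirMixDens κ ρ μ t y‖ ≤
      y ^ (κ - 1) * ∑' i, cirMajorant κ ρ x i :=
  (ae_restrict_iff' measurableSet_Ioc).2 <| ae_of_all _ fun _ hy =>
    (Real.norm_of_nonneg (cirMixDens_nonneg hκ hρ hμ (by linarith) _)).trans_le
      (cirMixDens_le hκ hρ hμ ht hy)

lemma monotone_cirMixCDF (ht : 1 ≤ t) : Monotone (cirMixCDF κ ρ μ t) := fun _ x h =>
  setIntegral_mono_set ((integrableOn_cirMajorant_bound hκ x).mono'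
      measurable_cirMixDens.aestronglyMeasurable (cirMixDens_norm_le_ae hκ hρ hμ ht x))
    (ae_of_all _ (cirMixDens_nonneg hκ hρ hμ (by linarith))) (Ioc_subset_Ioc_right h).eventuallyLE

lemma tendsto_cirMixCDF_atTop (x : ℝ) :
    Tendsto (fun t => cirMixCDF κ ρ μ t x) atTop
      (𝓝 (cdf (gammaMeasure κ (κ / ρ)) x)) := by
  rw [← setIntegral_Ioc_gamP hκ (div_pos hκ hρ)]
  exact tendsto_integral_filter_of_dominated_convergence _
    (Eventually.of_forall fun _ => measurable_cirMixDens.aestronglyMeasurable)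
    ((eventually_ge_atTop 1).mono fun _ ht => cirMixDens_norm_le_ae hκ hρ hμ ht x)
    (integrableOn_cirMajorant_bound hκ x)
    ((ae_restrict_iff' measurableSet_Ioc).2 <| ae_of_all _ fun _ hy =>
      tendsto_cirMixDens_atTop hκ hρ hμ hy.1)

lemma tendsto_sInf_setOf_le_cirMixCDF {u : ℝ} (hu : u ∈ Ioo 0 1) :
    Tendsto (fun t => sInf {z | u ≤ cirMixCDF κ ρ μ t z}) atTop (𝓝 (FgammaInv κ ρ u)) := by
  obtain ⟨hbelow, habove⟩ := cdf_gammaMeasure_quantile hκ (div_pos hκ hρ) hu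
  rw [FgammaInv_eq hκ hρ]
  exact tendsto_sInf_setOf_le ((eventually_ge_atTop 1).mono fun _ => monotone_cirMixCDF hκ hρ hμ)
    (tendsto_cirMixCDF_atTop hκ hρ hμ) hbelow habove

end CIRMixture

section InitialDegrees

variable {W : ℝ → ℝ → ℕ → ℝ}

lemma measurable_degW (hW : IsMultigraphon W) : Measurable (degW W) := by
  have h : Measurable fun p : ℝ × ℝ => ∑' k : ℕ, (k : ℝ) * W p.1 p.2 k :=
    Measurable.tsum fun k => (hW.1.comp (f := fun p : ℝ × ℝ => (p.1, p.2, k))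
      (by fun_prop)).const_mul _
  exact h.stronglyMeasurable.integral_prod_right'.measurable

lemma degW_nonneg (hW : IsMultigraphon W) (x : ℝ) : 0 ≤ degW W x :=
  integral_nonneg fun y => tsum_nonneg fun k => mul_nonneg k.cast_nonneg (hW.2.1 x y k).1

lemma isProbabilityMeasure_F0meas (hW : IsMultigraphon W) : IsProbabilityMeasure (F0meas W) :=
  have : IsProbabilityMeasure (volume.restrict (Icc (0:ℝ) 1)) := ⟨by simp⟩
  Measure.isProbabilityMeasure_map (measurable_degW hW).aemeasurable

lemma F0meas_ae_nonneg (hW : IsMultigraphon W) : ∀ᵐ z ∂F0meas W, 0 ≤ z :=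
  (ae_map_iff (measurable_degW hW).aemeasurable measurableSet_Ici).2
    (ae_of_all _ (degW_nonneg hW))

end InitialDegrees

lemma WhatER_eq_poissonMultigraphon (κ : ℝ) (W : ℝ → ℝ → ℕ → ℝ) (t : ℝ) :
    WhatER κ W t = poissonMultigraphon (FcirInv κ (rhoW W) W t) (rhoW W) := rfl

lemma WhatInfER_eq_poissonMultigraphon (κ ρ : ℝ) :
    WhatInfER κ ρ = poissonMultigraphon (FgammaInv κ ρ) ρ := rfl

theorem What_limit_stationary_general
    (κ : ℝ) (hκ : 0 < κ)
    (W : ℝ → ℝ → ℕ → ℝ) (hW : IsMultigraphon W)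
    (hρpos : 0 < rhoW W)
    (k : ℕ) (A : ℕ → ℕ → ℕ) :
    Tendsto (fun t : ℝ => tEqW k A (WhatER κ W t)) atTop
      (𝓝 (tEqW k A (WhatInfER κ (rhoW W)))) := by
  have := isProbabilityMeasure_F0meas hW
  have hinv (u : ℝ) (hu : u ∈ Ioo 0 1) :
      Tendsto (fun t => FcirInv κ (rhoW W) W t u) atTop (𝓝 (FgammaInv κ (rhoW W) u)) :=
    tendsto_sInf_setOf_le_cirMixCDF hκ hρpos (F0meas_ae_nonneg hW) hu
  have hinv_nonneg (t u : ℝ) (hu : 0 < u) : 0 ≤ FcirInv κ (rhoW W) W t u :=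
    sInf_setOf_le_nonneg fun z hz => by simpa [Fcir, Ioc_eq_empty_of_le hz.le] using hu
  simp only [WhatER_eq_poissonMultigraphon, WhatInfER_eq_poissonMultigraphon]
  exact tendsto_tEqW_of_tendsto k A
    (Eventually.of_forall fun t => measurable_poissonMultigraphon measurable_sInf_setOf_le)
    (Eventually.of_forall fun t x hx y hy => poissonMultigraphon_mem_Icc hρpos.le
      (hinv_nonneg t x hx.1) (hinv_nonneg t y hy.1))
    fun x hx y hy => tendsto_poissonMultigraphon (hinv x hx) (hinv y hy)

/-- `lim_{t→∞} Ŵ_t ≅ Ŵ_∞`. -/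
theorem What_limit_stationary
    (κ : ℝ) (hκ : 0 < κ)
    (W : ℝ → ℝ → ℕ → ℝ) (hW : IsMultigraphon W)
    (hρpos : 0 < rhoW W) (hρfin : IntegrableOn (degW W) (Icc (0:ℝ) 1))
    (k : ℕ) (A : ℕ → ℕ → ℕ) (hA : IsAdjOn k A) :
    Tendsto (fun t : ℝ => tEqW k A (WhatER κ W t)) atTop
      (𝓝 (tEqW k A (WhatInfER κ (rhoW W)))) :=
  What_limit_stationary_general κ hκ W hW hρpos k A

end
end
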